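/- arXiv:2509.26444 — 9 statements merged into one kernel-verified Lean document; each statement's English description precedes it below -/
import Mathlib

section
/- Let G be a countable torsion-free abelian group and σ : G → ℝ² a group homomorphism whose image contains ℤ² and is dense in ℝ². Define G⁺ = {0} ∪ σ⁻¹((0,∞)×(0,∞)). Then (G, G⁺) is an ordered abelian group: G⁺ + G⁺ ⊆ G⁺, G⁺ − G⁺ = G, and G⁺ ∩ (−G⁺) = {0}. -/
/-- The positive cone `{0} ∪ σ⁻¹((0,∞)×(0,∞))`. -/
def posCone {G : Type*} [AddCommGroup G] (σ : G →+ ℝ × ℝ) : Set G :=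
  {0} ∪ σ ⁻¹' {p : ℝ × ℝ | 0 < p.1 ∧ 0 < p.2}

theorem stmt0 {G : Type*} [AddCommGroup G] [Countable G]
    (htorsionfree : ∀ (g : G) (n : ℤ), n ≠ 0 → n • g = 0 → g = 0)
    (σ : G →+ ℝ × ℝ)
    (hZ : ∀ z : ℤ × ℤ, ((z.1 : ℝ), (z.2 : ℝ)) ∈ Set.range σ)
    (hdense : Dense (Set.range σ)) :
    (∀ a ∈ posCone σ, ∀ b ∈ posCone σ, a + b ∈ posCone σ) ∧
    (∀ g : G, ∃ a ∈ posCone σ, ∃ b ∈ posCone σ, g = a - b) ∧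
    (∀ a : G, a ∈ posCone σ → -a ∈ posCone σ → a = 0) := by
  refine ⟨?_, ?_, ?_⟩
  · rintro a (ha | ha) b hb
    · simp only [Set.mem_singleton_iff] at ha; subst ha; simpa using hb
    · rcases hb with hb | hb
      · simp only [Set.mem_singleton_iff] at hb; subst hb
        exact Or.inr (by simpa using ha)
      · refine Or.inr ?_
        simp only [Set.mem_preimage, Set.mem_setOf_eq, map_add] at *
        exact ⟨add_pos ha.1 hb.1, add_pos ha.2 hb.2⟩
  · intro g
    have hopen : IsOpen {p : ℝ × ℝ |
        max 0 (σ g).1 < p.1 ∧ max 0 (σ g).2 < p.2} :=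
      (isOpen_lt continuous_const continuous_fst).inter
        (isOpen_lt continuous_const continuous_snd)
    have hne : {p : ℝ × ℝ |
        max 0 (σ g).1 < p.1 ∧ max 0 (σ g).2 < p.2}.Nonempty :=
      ⟨(max 0 (σ g).1 + 1, max 0 (σ g).2 + 1), by
        exact ⟨lt_add_one _, lt_add_one _⟩⟩
    obtain ⟨x, ⟨a, rfl⟩, h1, h2⟩ := hdense.exists_mem_open hopen hne
    refine ⟨a, Or.inr ⟨lt_of_le_of_lt (le_max_left _ _) h1,
        lt_of_le_of_lt (le_max_left _ _) h2⟩, a - g, Or.inr ?_, by abel⟩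
    simp only [Set.mem_preimage, Set.mem_setOf_eq, map_sub, Prod.fst_sub, Prod.snd_sub]
    exact ⟨sub_pos.mpr (lt_of_le_of_lt (le_max_right _ _) h1),
      sub_pos.mpr (lt_of_le_of_lt (le_max_right _ _) h2)⟩
  · rintro a (ha | ha) hb
    · simpa using ha
    · rcases hb with hb | hb
      · simpa [neg_eq_zero] using hb
      · exfalso
        simp only [Set.mem_preimage, Set.mem_setOf_eq, map_neg, Prod.fst_neg] at ha hb
        linarith [ha.1, hb.1]
end

section
/- Let G be a countable torsion-free abelian group and σ : G → ℝ² a group homomorphism whose image contains ℤ² and is dense in ℝ². With G⁺ = {0} ∪ σ⁻¹((0,∞)×(0,∞)), the ordered group (G, G⁺) satisfies Riesz interpolation: for any a₁, a₂, b₁, b₂ ∈ G with aᵢ ≤ bⱼ for all i, j (where x ≤ y means y − x ∈ G⁺), there exists c ∈ G with aᵢ ≤ c ≤ bⱼ for all i, j. -/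
/-- Riesz interpolation for `(G, G⁺)`, where `x ≤ y` means `y - x ∈ G⁺`. -/
theorem stmt2 {G : Type*} [AddCommGroup G] [Countable G]
    (htorsionfree : ∀ (g : G) (n : ℤ), n ≠ 0 → n • g = 0 → g = 0)
    (σ : G →+ ℝ × ℝ)
    (hZ : ∀ z : ℤ × ℤ, ((z.1 : ℝ), (z.2 : ℝ)) ∈ Set.range σ)
    (hdense : Dense (Set.range σ)) :
    ∀ a₁ a₂ b₁ b₂ : G,
      b₁ - a₁ ∈ posCone σ → b₁ - a₂ ∈ posCone σ →
      b₂ - a₁ ∈ posCone σ → b₂ - a₂ ∈ posCone σ →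
      ∃ c : G, c - a₁ ∈ posCone σ ∧ c - a₂ ∈ posCone σ ∧
        b₁ - c ∈ posCone σ ∧ b₂ - c ∈ posCone σ := by
  intro a₁ a₂ b₁ b₂ h₁₁ h₁₂ h₂₁ h₂₂
  have hzero : (0 : G) ∈ posCone σ := Or.inl rfl
  -- handle the cases where some difference is zero
  rcases h₁₁ with h0 | p₁₁
  · have e : b₁ = a₁ := sub_eq_zero.mp h0
    refine ⟨a₁, by simpa using hzero, ?_, by simp [← e, hzero], ?_⟩
    · rw [← e]; exact h₁₂
    · exact h₂₁
  rcases h₁₂ with h0 | p₁₂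
  · have e : b₁ = a₂ := sub_eq_zero.mp h0
    refine ⟨a₂, ?_, by simpa using hzero, by simp [← e, hzero], ?_⟩
    · rw [← e]; exact Or.inr p₁₁
    · exact h₂₂
  rcases h₂₁ with h0 | p₂₁
  · have e : b₂ = a₁ := sub_eq_zero.mp h0
    refine ⟨a₁, by simpa using hzero, ?_, ?_, by simp [← e, hzero]⟩
    · rw [← e]; exact h₂₂
    · exact Or.inr p₁₁
  rcases h₂₂ with h0 | p₂₂
  · have e : b₂ = a₂ := sub_eq_zero.mp h0
    refine ⟨a₂, ?_, by simpa using hzero, Or.inr p₁₂, by simp [← e, hzero]⟩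
    rw [← e]; exact Or.inr p₂₁
  -- now all differences are strictly positive under σ
  have key : ∀ x y : G, σ (y - x) ∈ {p : ℝ × ℝ | 0 < p.1 ∧ 0 < p.2} →
      (σ x).1 < (σ y).1 ∧ (σ x).2 < (σ y).2 := by
    intro x y h
    rw [map_sub] at h
    exact ⟨sub_pos.mp h.1, sub_pos.mp h.2⟩
  obtain ⟨q₁₁, r₁₁⟩ := key _ _ p₁₁
  obtain ⟨q₁₂, r₁₂⟩ := key _ _ p₁₂
  obtain ⟨q₂₁, r₂₁⟩ := key _ _ p₂₁
  obtain ⟨q₂₂, r₂₂⟩ := key _ _ p₂₂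
  set A1 := max (σ a₁).1 (σ a₂).1 with hA1
  set A2 := max (σ a₁).2 (σ a₂).2 with hA2
  set B1 := min (σ b₁).1 (σ b₂).1 with hB1
  set B2 := min (σ b₁).2 (σ b₂).2 with hB2
  have hAB1 : A1 < B1 := max_lt (lt_min q₁₁ q₂₁) (lt_min q₁₂ q₂₂)
  have hAB2 : A2 < B2 := max_lt (lt_min r₁₁ r₂₁) (lt_min r₁₂ r₂₂)
  have hUopen : IsOpen (Set.Ioo A1 B1 ×ˢ Set.Ioo A2 B2) :=
    isOpen_Ioo.prod isOpen_Ioo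
  have hUne : (Set.Ioo A1 B1 ×ˢ Set.Ioo A2 B2).Nonempty :=
    (Set.nonempty_Ioo.mpr hAB1).prod (Set.nonempty_Ioo.mpr hAB2)
  obtain ⟨p, ⟨g, hg⟩, hpU⟩ := hdense.exists_mem_open hUopen hUne
  obtain ⟨⟨hp1l, hp1r⟩, ⟨hp2l, hp2r⟩⟩ := hpU
  refine ⟨g, Or.inr ?_, Or.inr ?_, Or.inr ?_, Or.inr ?_⟩ <;>
    simp only [Set.mem_preimage, Set.mem_setOf_eq, map_sub, hg, Prod.fst_sub, Prod.snd_sub,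
      sub_pos]
  · exact ⟨lt_of_le_of_lt (le_max_left _ _) hp1l, lt_of_le_of_lt (le_max_left _ _) hp2l⟩
  · exact ⟨lt_of_le_of_lt (le_max_right _ _) hp1l, lt_of_le_of_lt (le_max_right _ _) hp2l⟩
  · exact ⟨lt_of_lt_of_le hp1r (min_le_left _ _), lt_of_lt_of_le hp2r (min_le_left _ _)⟩
  · exact ⟨lt_of_lt_of_le hp1r (min_le_right _ _), lt_of_lt_of_le hp2r (min_le_right _ _)⟩
end

section
/- Let G be a countable torsion-free abelian group and σ : G → ℝ² a group homomorphism whose image contains ℤ² and is dense in ℝ², and set G⁺ = {0} ∪ σ⁻¹((0,∞)×(0,∞)). Then every nonzero element of G⁺ is an order unit: if g ∈ G⁺, g ≠ 0, then for every a ∈ G there is a positive integer k with kg − a ∈ G⁺. -/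
/-- Every nonzero positive element is an order unit. -/
theorem stmt3 {G : Type*} [AddCommGroup G] [Countable G]
    (htorsionfree : ∀ (g : G) (n : ℤ), n ≠ 0 → n • g = 0 → g = 0)
    (σ : G →+ ℝ × ℝ)
    (hZ : ∀ z : ℤ × ℤ, ((z.1 : ℝ), (z.2 : ℝ)) ∈ Set.range σ)
    (hdense : Dense (Set.range σ)) :
    ∀ g ∈ posCone σ, g ≠ 0 → ∀ a : G, ∃ k : ℕ, 0 < k ∧ k • g - a ∈ posCone σ := by
  intro g hg hg0 a
  rcases hg with h0 | hpos
  · exact absurd h0 hg0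
  obtain ⟨h1, h2⟩ := hpos
  obtain ⟨n, hn⟩ := exists_nat_gt (max ((σ a).1 / (σ g).1) ((σ a).2 / (σ g).2))
  refine ⟨n + 1, Nat.succ_pos n, Or.inr ?_⟩
  have hn1 : ((σ a).1 / (σ g).1) < (n + 1 : ℝ) :=
    lt_of_le_of_lt (le_max_left _ _) (lt_of_lt_of_le hn (by push_cast; linarith))
  have hn2 : ((σ a).2 / (σ g).2) < (n + 1 : ℝ) :=
    lt_of_le_of_lt (le_max_right _ _) (lt_of_lt_of_le hn (by push_cast; linarith))
  have e1 := (div_lt_iff₀ h1).mp hn1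
  have e2 := (div_lt_iff₀ h2).mp hn2
  have hσ : σ ((n + 1) • g - a) = (n + 1 : ℕ) • σ g - σ a := by
    simp [map_sub, map_nsmul]
  constructor
  · show 0 < (σ ((n + 1) • g - a)).1
    rw [hσ]
    simp only [Prod.fst_sub, Prod.smul_fst]
    rw [nsmul_eq_mul]
    push_cast
    linarith
  · show 0 < (σ ((n + 1) • g - a)).2
    rw [hσ]
    simp only [Prod.snd_sub, Prod.smul_snd]
    rw [nsmul_eq_mul]
    push_cast
    linarith
end

section
/- Let G, σ, G⁺ be as above, with σ₁, σ₂ the coordinate functions of σ. Suppose u¹, u² ∈ G satisfy σ(u¹) = (1,0) and σ(u²) = (0,1). Then neither u¹ nor u² lies in G⁺, while u = u¹ + u² is an order unit for (G, G⁺), and σ₁, σ₂ are states on (G, G⁺) with respect to u. -/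
/-- `u` is an order unit for the cone `P`. -/
def IsOrderUnit {G : Type*} [AddCommGroup G] (P : Set G) (u : G) : Prop :=
  u ∈ P ∧ ∀ a : G, ∃ k : ℕ, 0 < k ∧ k • u - a ∈ P

/-- A state on `(G, P)` with respect to the order unit `u`. -/
def IsState {G : Type*} [AddCommGroup G] (P : Set G) (u : G) (τ : G →+ ℝ) : Prop :=
  (∀ a ∈ P, 0 ≤ τ a) ∧ τ u = 1

theorem stmt4 {G : Type*} [AddCommGroup G] [Countable G]
    (htorsionfree : ∀ (g : G) (n : ℤ), n ≠ 0 → n • g = 0 → g = 0)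
    (σ : G →+ ℝ × ℝ)
    (hZ : ∀ z : ℤ × ℤ, ((z.1 : ℝ), (z.2 : ℝ)) ∈ Set.range σ)
    (hdense : Dense (Set.range σ))
    (u₁ u₂ : G) (hu₁ : σ u₁ = (1, 0)) (hu₂ : σ u₂ = (0, 1)) :
    u₁ ∉ posCone σ ∧ u₂ ∉ posCone σ ∧
    IsOrderUnit (posCone σ) (u₁ + u₂) ∧
    IsState (posCone σ) (u₁ + u₂) ((AddMonoidHom.fst ℝ ℝ).comp σ) ∧
    IsState (posCone σ) (u₁ + u₂) ((AddMonoidHom.snd ℝ ℝ).comp σ) := by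
  have hsum : σ (u₁ + u₂) = (1, 1) := by simp [hu₁, hu₂, Prod.ext_iff]
  refine ⟨?_, ?_, ⟨?_, ?_⟩, ⟨?_, ?_⟩, ⟨?_, ?_⟩⟩
  · rintro (h | h)
    · have : σ u₁ = 0 := by rw [Set.mem_singleton_iff.mp h, map_zero]
      rw [hu₁] at this; exact one_ne_zero (congrArg Prod.fst this)
    · rw [Set.mem_preimage, hu₁] at h; exact lt_irrefl (0:ℝ) h.2
  · rintro (h | h)
    · have : σ u₂ = 0 := by rw [Set.mem_singleton_iff.mp h, map_zero]
      rw [hu₂] at this; exact one_ne_zero (congrArg Prod.snd this)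
    · rw [Set.mem_preimage, hu₂] at h; exact lt_irrefl (0:ℝ) h.1
  · exact Or.inr (by rw [Set.mem_preimage, hsum]; exact ⟨one_pos, one_pos⟩)
  · intro a
    obtain ⟨k, hk⟩ := exists_nat_gt (max (σ a).1 (σ a).2)
    refine ⟨k + 1, Nat.succ_pos k, Or.inr ?_⟩
    have h1 : ((k:ℝ) + 1) > (σ a).1 :=
      lt_of_le_of_lt (le_max_left _ _) (hk.trans (lt_add_one _))
    have h2 : ((k:ℝ) + 1) > (σ a).2 :=
      lt_of_le_of_lt (le_max_right _ _) (hk.trans (lt_add_one _))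
    simp only [Set.mem_preimage, map_sub, map_nsmul, hsum, Set.mem_setOf_eq,
      Prod.fst_sub, Prod.snd_sub, Prod.smul_fst, Prod.smul_snd, smul_eq_mul,
      nsmul_eq_mul, mul_one, Nat.cast_add, Nat.cast_one, Prod.fst_mul, Prod.snd_mul, Prod.fst_natCast, Prod.snd_natCast, Prod.fst_one, Prod.snd_one, Prod.fst_add, Prod.snd_add]
    exact ⟨by linarith, by linarith⟩
  · rintro a (h | h)
    · simp [Set.mem_singleton_iff.mp h]
    · exact le_of_lt h.1
  · simp [hsum]
  · rintro a (h | h)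
    · simp [Set.mem_singleton_iff.mp h]
    · exact le_of_lt h.2
  · simp [hsum]
end

section
/- Let (G, G⁺) be a simple dimension group with exactly two extremal states σ₁, σ₂ and elements u¹, u² with σ₁(u¹) = σ₂(u²) = 1 and σ₁(u²) = σ₂(u¹) = 0. Then the image of the map σ(g) = (σ₁(g), σ₂(g)) is dense in ℝ². -/
/-- `P` is the positive cone of an ordered abelian group structure on `G`. -/
def IsPosCone {G : Type*} [AddCommGroup G] (P : Set G) : Prop :=
  (∀ a ∈ P, ∀ b ∈ P, a + b ∈ P) ∧
  (∀ g : G, ∃ a ∈ P, ∃ b ∈ P, g = a - b) ∧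
  (∀ a : G, a ∈ P → -a ∈ P → a = 0)

/-- The ordered group `(G, P)` is unperforated. -/
def Unperforated {G : Type*} [AddCommGroup G] (P : Set G) : Prop :=
  ∀ (n : ℕ) (g : G), 0 < n → n • g ∈ P → g ∈ P

/-- The ordered group `(G, P)` satisfies Riesz interpolation. -/
def RieszInterp {G : Type*} [AddCommGroup G] (P : Set G) : Prop :=
  ∀ a₁ a₂ b₁ b₂ : G,
    b₁ - a₁ ∈ P → b₁ - a₂ ∈ P → b₂ - a₁ ∈ P → b₂ - a₂ ∈ P →
    ∃ c : G, c - a₁ ∈ P ∧ c - a₂ ∈ P ∧ b₁ - c ∈ P ∧ b₂ - c ∈ P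

/-- `(G, P)` is a simple dimension group: by the Effros-Handelman-Shen theorem, a
countable unperforated ordered abelian group with Riesz interpolation, in which every
nonzero positive element is an order unit. -/
def IsSimpleDimensionGroup {G : Type*} [AddCommGroup G] (P : Set G) : Prop :=
  Countable G ∧ IsPosCone P ∧ Unperforated P ∧ RieszInterp P ∧
    ∀ g ∈ P, g ≠ 0 → IsOrderUnit P g

/-- An extremal state: a state which is not a nontrivial convex combination of states. -/
def IsExtremalState {G : Type*} [AddCommGroup G] (P : Set G) (u : G) (τ : G →+ ℝ) : Prop :=
  IsState P u τ ∧ ∀ τ₁ τ₂ : G →+ ℝ, IsState P u τ₁ → IsState P u τ₂ →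
    ∀ t : ℝ, 0 < t → t < 1 → (∀ g : G, τ g = t * τ₁ g + (1 - t) * τ₂ g) → τ₁ = τ₂

/-!
Put `σ = (σ₁, σ₂) : G →+ ℝ × ℝ` and `φ = σ₁ + σ₂`. For an order unit `g`, the subgroup
`σ⁻¹(ℝ ∙ σ g)` contains `g` but not both of `u₁, u₂`, so by Riesz decomposition some
`0 ≤ e ≤ g` has `σ e ∉ ℝ ∙ σ g`; then also `σ (g - e) ∉ ℝ ∙ σ g`, and the smaller of `e`, `g - e`
has at most half the `φ`-value of `g`. By simplicity that piece is again an order unit, so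
iterating gives order units `g` with `φ g` arbitrarily small, together with `e ≤ g` for which
`σ g, σ e` is a basis of `ℝ²` of small norm. The lattice it spans lies in `σ(G)` and is
`ε`-dense.
-/

section OrderUnit

variable {G : Type*} [AddCommGroup G] {P : Set G}

/-- `IsPosCone` does not ask for `0 ∈ P`, so the order `a ≤ b` is `b - a ∈ insert 0 P`. -/
def IsPosCone.nonnegCone (hP : IsPosCone P) : AddSubmonoid G where
  carrier := insert 0 P
  zero_mem' := Set.mem_insert 0 P
  add_mem' := by
    rintro a b (rfl | ha) (rfl | hb)
    · simp
    · simpa using Or.inr hb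
    · simpa using Or.inr ha
    · exact Or.inr (hP.1 a ha b hb)

lemma IsPosCone.eq_zero_of_mem_nonnegCone (hP : IsPosCone P) {a : G}
    (ha : a ∈ hP.nonnegCone) (ha' : -a ∈ hP.nonnegCone) : a = 0 := by
  rcases ha with rfl | ha
  · rfl
  rcases ha' with h | ha'
  · exact neg_eq_zero.mp h
  · exact hP.2.2 a ha ha'

lemma RieszInterp.insert_zero (hR : RieszInterp P) : RieszInterp (insert 0 P) := by
  intro a₁ a₂ b₁ b₂ h₁₁ h₁₂ h₂₁ h₂₂
  rcases h₁₁ with h | h₁₁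
  · have e := sub_eq_zero.mp h
    exact ⟨b₁, by simp [e], h₁₂, by simp, by rwa [e]⟩
  rcases h₁₂ with h | h₁₂
  · have e := sub_eq_zero.mp h
    exact ⟨b₁, Or.inr h₁₁, by simp [e], by simp, by rwa [e]⟩
  rcases h₂₁ with h | h₂₁
  · have e := sub_eq_zero.mp h
    exact ⟨b₂, by simp [e], h₂₂, by rw [e]; exact Or.inr h₁₁, by simp⟩
  rcases h₂₂ with h | h₂₂
  · have e := sub_eq_zero.mp h
    exact ⟨b₂, Or.inr h₂₁, by simp [e], by rw [e]; exact Or.inr h₁₂, by simp⟩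
  obtain ⟨c, hc⟩ := hR a₁ a₂ b₁ b₂ h₁₁ h₁₂ h₂₁ h₂₂
  exact ⟨c, Or.inr hc.1, Or.inr hc.2.1, Or.inr hc.2.2.1, Or.inr hc.2.2.2⟩

theorem IsPosCone.mem_closure_interval_of_le_nsmul (hP : IsPosCone P) (hR : RieszInterp P)
    {g : G} (hg : g ∈ hP.nonnegCone) (k : ℕ) {h : G} (hh : h ∈ hP.nonnegCone)
    (hhk : k • g - h ∈ hP.nonnegCone) :
    h ∈ AddSubmonoid.closure {e | e ∈ hP.nonnegCone ∧ g - e ∈ hP.nonnegCone} := by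
  induction k generalizing h with
  | zero =>
    rw [hP.eq_zero_of_mem_nonnegCone hh (by simpa using hhk)]
    exact zero_mem _
  | succ k ih =>
    -- `c` with `0, h - k • g ≤ c ≤ h, g` splits off a piece of `[0, g]`
    obtain ⟨c, hc₀, hck, hhc, hgc⟩ := hR.insert_zero 0 (h - k • g) h g
      (by rw [sub_zero]; exact hh) (by rw [sub_sub_cancel]; exact hP.nonnegCone.nsmul_mem hg k)
      (by rw [sub_zero]; exact hg) (by rw [sub_sub_eq_add_sub, add_comm, ← succ_nsmul]; exact hhk)
    rw [sub_zero] at hc₀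
    have hc : c ∈ AddSubmonoid.closure {e | e ∈ hP.nonnegCone ∧ g - e ∈ hP.nonnegCone} :=
      AddSubmonoid.subset_closure ⟨hc₀, hgc⟩
    have hrest := ih (h := h - c) hhc
      (by rw [show k • g - (h - c) = c - (h - k • g) by abel]; exact hck)
    simpa using add_mem hc hrest

theorem IsOrderUnit.exists_mem_sub_mem_notMem (hP : IsPosCone P) (hR : RieszInterp P) {g : G}
    (hg : IsOrderUnit P g) {H : AddSubgroup G} (hgH : g ∈ H) (hH : H ≠ ⊤) :
    ∃ e ∈ P, g - e ∈ P ∧ e ∉ H := by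
  by_contra! hsub
  have hinterval : {e | e ∈ hP.nonnegCone ∧ g - e ∈ hP.nonnegCone} ⊆ H := by
    rintro e ⟨rfl | he, hge⟩
    · exact zero_mem H
    rcases hge with hge | hge
    · rwa [← sub_eq_zero.mp hge]
    · exact hsub e he hge
  have hpos : ∀ a ∈ P, a ∈ H := fun a ha => by
    obtain ⟨k, -, hk⟩ := hg.2 a
    exact AddSubmonoid.closure_le (S := H.toAddSubmonoid) |>.mpr hinterval
      (hP.mem_closure_interval_of_le_nsmul hR (Or.inr hg.1) k (Or.inr ha) (Or.inr hk))
  refine hH (eq_top_iff.mpr fun x _ => ?_)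
  obtain ⟨a, ha, b, hb, rfl⟩ := hP.2.1 x
  exact sub_mem (hpos a ha) (hpos b hb)

theorem IsOrderUnit.eq_zero_of_map_eq_zero {M : Type*} [AddCommGroup M] [PartialOrder M]
    [IsOrderedAddMonoid M] {τ : G →+ M} (hτ : ∀ a ∈ P, 0 ≤ τ a) {g : G}
    (hg : IsOrderUnit P g) (hτg : τ g = 0) : τ = 0 := by
  have hle : ∀ a, τ a ≤ 0 := fun a => by
    obtain ⟨k, -, hk⟩ := hg.2 a
    simpa [hτg] using hτ _ hk
  ext a
  exact le_antisymm (hle a) (by simpa using hle (-a))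

end OrderUnit

theorem AddSubgroup.dense_of_forall_exists_basis {E ι : Type*} [NormedAddCommGroup E]
    [NormedSpace ℝ E] [Fintype ι] (S : AddSubgroup E)
    (h : ∀ ε > 0, ∃ b : Module.Basis ι ℝ E, (∀ i, b i ∈ S) ∧ ∑ i, ‖b i‖ < ε) :
    Dense (S : Set E) := by
  refine Metric.dense_iff.mpr fun p r hr => ?_
  obtain ⟨b, hbS, hb⟩ := h r hr
  refine ⟨∑ i, ⌊b.repr p i⌋ • b i, ?_, sum_mem fun i _ => zsmul_mem (hbS i) _⟩
  rw [Metric.mem_ball, dist_comm, dist_eq_norm]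
  calc ‖p - ∑ i, ⌊b.repr p i⌋ • b i‖ = ‖∑ i, Int.fract (b.repr p i) • b i‖ := by
        nth_rw 1 [← b.sum_repr p]
        simp only [← Finset.sum_sub_distrib, ← Int.self_sub_floor, sub_smul,
          Int.cast_smul_eq_zsmul]
    _ ≤ ∑ i, ‖b i‖ := by
        refine (norm_sum_le _ _).trans (Finset.sum_le_sum fun i _ => ?_)
        rw [norm_smul, Real.norm_of_nonneg (Int.fract_nonneg _)]
        exact mul_le_of_le_one_left (norm_nonneg _) (Int.fract_lt_one _).le
    _ < r := hb

lemma Prod.norm_le_fst_add_snd {v : ℝ × ℝ} (hv : 0 ≤ v) : ‖v‖ ≤ v.1 + v.2 := by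
  rw [Prod.norm_def, Real.norm_of_nonneg hv.1, Real.norm_of_nonneg hv.2]
  exact max_le (le_add_of_nonneg_right hv.2) (le_add_of_nonneg_left hv.1)

lemma one_zero_notMem_span_or_zero_one_notMem_span (v : ℝ × ℝ) :
    (1, 0) ∉ ℝ ∙ v ∨ (0, 1) ∉ ℝ ∙ v := by
  by_contra! h
  obtain ⟨⟨a, ha⟩, ⟨b, hb⟩⟩ :=
    h.imp Submodule.mem_span_singleton.mp Submodule.mem_span_singleton.mp
  simp only [Prod.ext_iff, Prod.smul_fst, Prod.smul_snd, smul_eq_mul] at ha hb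
  exact one_ne_zero (by linear_combination (-(b * v.2)) * ha.1 + (b * v.1) * ha.2 - hb.2 :
    (1 : ℝ) = 0)

section PositiveMapToPlane

variable {G : Type*} [AddCommGroup G] {P : Set G} {σ : G →+ ℝ × ℝ}

theorem IsOrderUnit.exists_half_notMem_span (hP : IsPosCone P) (hR : RieszInterp P)
    (hspan : ∀ v : ℝ × ℝ, ∃ x, σ x ∉ ℝ ∙ v) {g : G} (hg : IsOrderUnit P g) :
    ∃ e ∈ P, 2 * ((σ e).1 + (σ e).2) ≤ (σ g).1 + (σ g).2 ∧ σ e ∉ ℝ ∙ σ g := by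
  set H := (ℝ ∙ σ g).toAddSubgroup.comap σ
  have hH : H ≠ ⊤ := by
    obtain ⟨x, hx⟩ := hspan (σ g)
    exact fun h => hx (h ▸ AddSubgroup.mem_top x : x ∈ H)
  obtain ⟨e, he, hge, heH⟩ :=
    hg.exists_mem_sub_mem_notMem hP hR (Submodule.mem_span_singleton_self (σ g)) hH
  have hgeH : g - e ∉ H := fun h =>
    heH (by simpa [H] using sub_mem (Submodule.mem_span_singleton_self (σ g)) h)
  by_cases h : 2 * ((σ e).1 + (σ e).2) ≤ (σ g).1 + (σ g).2
  · exact ⟨e, he, h, heH⟩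
  · refine ⟨g - e, hge, ?_, hgeH⟩
    simp only [map_sub, Prod.fst_sub, Prod.snd_sub]
    linarith

theorem IsOrderUnit.exists_isOrderUnit_lt (hP : IsPosCone P) (hR : RieszInterp P)
    (hsimple : ∀ g ∈ P, g ≠ 0 → IsOrderUnit P g) (hspan : ∀ v : ℝ × ℝ, ∃ x, σ x ∉ ℝ ∙ v)
    {u : G} (hu : IsOrderUnit P u) {ε : ℝ} (hε : 0 < ε) :
    ∃ g, IsOrderUnit P g ∧ (σ g).1 + (σ g).2 < ε := by
  have halving : ∀ n : ℕ,
      ∃ g, IsOrderUnit P g ∧ 2 ^ n * ((σ g).1 + (σ g).2) ≤ (σ u).1 + (σ u).2 := by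
    intro n
    induction n with
    | zero => exact ⟨u, hu, by simp⟩
    | succ n ih =>
      obtain ⟨g, hg, hgu⟩ := ih
      obtain ⟨e, he, heg, heσg⟩ := hg.exists_half_notMem_span hP hR hspan
      refine ⟨e, hsimple e he (by rintro rfl; simp at heσg), ?_⟩
      calc 2 ^ (n + 1) * ((σ e).1 + (σ e).2) = 2 ^ n * (2 * ((σ e).1 + (σ e).2)) := by ring
        _ ≤ 2 ^ n * ((σ g).1 + (σ g).2) := by gcongr
        _ ≤ _ := hgu
  obtain ⟨n, hn⟩ := pow_unbounded_of_one_lt (((σ u).1 + (σ u).2) / ε) one_lt_two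
  obtain ⟨g, hg, hgu⟩ := halving n
  rw [div_lt_iff₀ hε] at hn
  exact ⟨g, hg, lt_of_mul_lt_mul_left (hgu.trans_lt hn) (by positivity)⟩

theorem exists_basis_mem_range_sum_norm_lt (hP : IsPosCone P) (hR : RieszInterp P)
    (hsimple : ∀ g ∈ P, g ≠ 0 → IsOrderUnit P g) (hσ : ∀ a ∈ P, 0 ≤ σ a)
    (hspan : ∀ v : ℝ × ℝ, ∃ x, σ x ∉ ℝ ∙ v) {u : G} (hu : IsOrderUnit P u) {ε : ℝ}
    (hε : 0 < ε) :
    ∃ b : Module.Basis (Fin 2) ℝ (ℝ × ℝ), (∀ i, b i ∈ σ.range) ∧ ∑ i, ‖b i‖ < ε := by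
  obtain ⟨g, hg, hgε⟩ := hu.exists_isOrderUnit_lt hP hR hsimple hspan (half_pos hε)
  obtain ⟨e, he, heg, heσg⟩ := hg.exists_half_notMem_span hP hR hspan
  have hσg : σ g ≠ 0 := fun h0 => by
    obtain ⟨x, hx⟩ := hspan 0
    simp [hg.eq_zero_of_map_eq_zero hσ h0] at hx
  have hli : LinearIndependent ℝ ![σ g, σ e] :=
    (LinearIndependent.pair_iff' hσg).mpr fun a h =>
      heσg (Submodule.mem_span_singleton.mpr ⟨a, h⟩)
  refine ⟨basisOfLinearIndependentOfCardEqFinrank hli (by simp), ?_, ?_⟩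
  · simp [Fin.forall_fin_two, coe_basisOfLinearIndependentOfCardEqFinrank]
  · simp only [coe_basisOfLinearIndependentOfCardEqFinrank, Fin.sum_univ_two,
      Matrix.cons_val_zero, Matrix.cons_val_one]
    linarith [Prod.norm_le_fst_add_snd (hσ g hg.1), Prod.norm_le_fst_add_snd (hσ e he)]

end PositiveMapToPlane

theorem stmt6_general {G : Type*} [AddCommGroup G] (P : Set G)
    (hG : IsSimpleDimensionGroup P)
    (u₁ u₂ : G) (hu : IsOrderUnit P (u₁ + u₂))
    (σ₁ σ₂ : G →+ ℝ)
    (hext₁ : IsExtremalState P (u₁ + u₂) σ₁)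
    (hext₂ : IsExtremalState P (u₁ + u₂) σ₂)
    (h11 : σ₁ u₁ = 1) (h22 : σ₂ u₂ = 1) (h12 : σ₁ u₂ = 0) (h21 : σ₂ u₁ = 0) :
    Dense (Set.range fun g : G => ((σ₁ g, σ₂ g) : ℝ × ℝ)) := by
  obtain ⟨-, hP, -, hR, hsimple⟩ := hG
  have hσ : ∀ a ∈ P, 0 ≤ σ₁.prod σ₂ a := fun a ha => ⟨hext₁.1.1 a ha, hext₂.1.1 a ha⟩
  have hspan : ∀ v : ℝ × ℝ, ∃ x, σ₁.prod σ₂ x ∉ ℝ ∙ v := fun v =>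
    (one_zero_notMem_span_or_zero_one_notMem_span v).elim
      (fun h => ⟨u₁, by simpa [h11, h21] using h⟩) (fun h => ⟨u₂, by simpa [h12, h22] using h⟩)
  change Dense (Set.range (σ₁.prod σ₂))
  rw [← AddMonoidHom.coe_range]
  exact (σ₁.prod σ₂).range.dense_of_forall_exists_basis fun ε hε =>
    exists_basis_mem_range_sum_norm_lt hP hR hsimple hσ hspan hu hε

theorem stmt6 {G : Type*} [AddCommGroup G] (P : Set G)
    (hG : IsSimpleDimensionGroup P)
    (u₁ u₂ : G) (hu : IsOrderUnit P (u₁ + u₂))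
    (σ₁ σ₂ : G →+ ℝ)
    (hext₁ : IsExtremalState P (u₁ + u₂) σ₁)
    (hext₂ : IsExtremalState P (u₁ + u₂) σ₂)
    (hne : σ₁ ≠ σ₂)
    (honly : ∀ τ : G →+ ℝ, IsExtremalState P (u₁ + u₂) τ → τ = σ₁ ∨ τ = σ₂)
    (h11 : σ₁ u₁ = 1) (h22 : σ₂ u₂ = 1) (h12 : σ₁ u₂ = 0) (h21 : σ₂ u₁ = 0) :
    Dense (Set.range fun g : G => ((σ₁ g, σ₂ g) : ℝ × ℝ)) :=
  stmt6_general P hG u₁ u₂ hu σ₁ σ₂ hext₁ hext₂ h11 h22 h12 h21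
end

section
/- Under the hypotheses of Theorem 1.3, if σ is any state on (G, G⁺) with respect to the order unit u = u¹ + u², then σ(u¹) ≥ 0 and σ(u²) ≥ 0, and there exist states σ₁, σ₂ with σ₁(u¹) = σ₂(u²) = 1 and σ₁(u²) = σ₂(u¹) = 0. -/
open scoped BigOperators

/-- The action of the block matrix `[[Aₙ^{1,1}, Aₙ^{1,2}],[Aₙ^{2,1}, Aₙ^{2,2}]]`
on `ℤ^{Jₙ} ⊕ ℤ^{Jₙ}`. -/
def blockStep (J : ℕ → ℕ) (A : ∀ n, Fin 2 → Fin 2 → Fin (J (n+1)) → Fin (J n) → ℤ)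
    (n : ℕ) (x : (Fin (J n) → ℤ) × (Fin (J n) → ℤ)) :
    (Fin (J (n+1)) → ℤ) × (Fin (J (n+1)) → ℤ) :=
  (fun j' => ∑ j, (A n 0 0 j' j * x.1 j + A n 0 1 j' j * x.2 j),
   fun j' => ∑ j, (A n 1 0 j' j * x.1 j + A n 1 1 j' j * x.2 j))

/-- The composite of `k` successive block matrices, from level `n` to level `n + k`. -/
def blockPush (J : ℕ → ℕ) (A : ∀ n, Fin 2 → Fin 2 → Fin (J (n+1)) → Fin (J n) → ℤ) :
    (k n : ℕ) → ((Fin (J n) → ℤ) × (Fin (J n) → ℤ)) →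
      (Fin (J (n+k)) → ℤ) × (Fin (J (n+k)) → ℤ)
  | 0, _, x => x
  | k+1, n, x => blockStep J A (n+k) (blockPush J A k n x)

open Filter Topology

/-!
For positivity, condition 4 makes `lₙ u¹ + 4 u²` and `4 u¹ + lₙ u²` nonnegative at level `n`, so
a state `σ` has `lₙ σ(u¹) + 4 σ(u²) ≥ 0` for every `n`; since `lₙ → ∞`, `σ(u¹) ≥ 0`.

For the states, fix one coordinate of the first (resp. second) block. Pushing a representative
of `g` up to level `m`, reading that coordinate and dividing by `Kₘ` gives functionals of `g` which
are eventually additive, eventually positive on `G⁺` and dominated on the order unit `u¹ + u²`,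
whose entries are all `≥ 1`. Their limit along an ultrafilter is a positive homomorphism. On `uⁱ`
the functionals are `uₘ^{i,p} / Kₘ`, which by condition 4 tend to `1` on the diagonal block and
are `O(1 / lₘ)` off it.
-/

section StateOfLimit

variable {ι G : Type*} [AddCommGroup G] {l : Filter ι} {P : Set G} {U : G} {f : ι → G → ℝ}

lemma eventually_map_nsmul (hadd : ∀ g h, ∀ᶠ i in l, f i (g + h) = f i g + f i h) (g : G) :
    ∀ N : ℕ, ∀ᶠ i in l, f i (N • g) = N * f i g
  | 0 => by
    filter_upwards [hadd 0 0] with i hi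
    rw [add_zero] at hi
    simp only [zero_smul, Nat.cast_zero, zero_mul]
    linarith
  | N + 1 => by
    filter_upwards [eventually_map_nsmul hadd g N, hadd (N • g) g] with i hN hi
    rw [succ_nsmul, hi, hN]
    push_cast
    ring

lemma eventually_le_mul_of_nsmul_sub_mem (hadd : ∀ g h, ∀ᶠ i in l, f i (g + h) = f i g + f i h)
    (hpos : ∀ g ∈ P, ∀ᶠ i in l, 0 ≤ f i g) {g : G} {N : ℕ} (h : N • U - g ∈ P) :
    ∀ᶠ i in l, f i g ≤ N * f i U := by
  filter_upwards [hpos _ h, hadd (N • U - g) g, eventually_map_nsmul hadd U N]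
    with i hsub hi hN
  rw [sub_add_cancel, hN] at hi
  linarith

lemma IsOrderUnit.eventually_mem_Icc (hU : IsOrderUnit P U)
    (hadd : ∀ g h, ∀ᶠ i in l, f i (g + h) = f i g + f i h)
    (hpos : ∀ g ∈ P, ∀ᶠ i in l, 0 ≤ f i g) {C : ℝ} (hC : ∀ᶠ i in l, f i U ≤ C) (g : G) :
    ∃ a b : ℝ, ∀ᶠ i in l, f i g ∈ Set.Icc a b := by
  obtain ⟨M, -, hM⟩ := hU.2 g
  obtain ⟨N, -, hN⟩ := hU.2 (-g)
  refine ⟨-(N * C), M * C, ?_⟩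
  filter_upwards [eventually_le_mul_of_nsmul_sub_mem hadd hpos hM,
    eventually_le_mul_of_nsmul_sub_mem hadd hpos hN, hadd g (-g), eventually_map_nsmul hadd g 0,
    hC] with i hle hge hneg hzero hCi
  simp only [add_neg_cancel, zero_smul, Nat.cast_zero, zero_mul] at hneg hzero
  have hM0 : (0 : ℝ) ≤ M := M.cast_nonneg
  have hN0 : (0 : ℝ) ≤ N := N.cast_nonneg
  constructor <;> nlinarith [mul_le_mul_of_nonneg_left hCi hM0, mul_le_mul_of_nonneg_left hCi hN0]

theorem exists_addMonoidHom_of_eventually_additive [l.NeBot] (hU : IsOrderUnit P U)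
    (hadd : ∀ g h, ∀ᶠ i in l, f i (g + h) = f i g + f i h)
    (hpos : ∀ g ∈ P, ∀ᶠ i in l, 0 ≤ f i g) (hbdd : IsBoundedUnder (· ≤ ·) l (f · U)) :
    ∃ σ : G →+ ℝ, (∀ g ∈ P, 0 ≤ σ g) ∧ ∀ g L, Tendsto (f · g) l (𝓝 L) → σ g = L := by
  obtain ⟨C, hC⟩ := hbdd
  obtain ⟨𝒰, h𝒰⟩ := Ultrafilter.exists_le l
  have hlim : ∀ g, ∃ L, Tendsto (f · g) 𝒰 (𝓝 L) := fun g => by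
    obtain ⟨a, b, hab⟩ := hU.eventually_mem_Icc hadd hpos hC g
    obtain ⟨L, -, hL⟩ := isCompact_Icc.ultrafilter_le_nhds (𝒰.map (f · g))
      (le_principal_iff.mpr (mem_map.mpr (h𝒰 hab)))
    exact ⟨L, hL⟩
  choose σ hσ using hlim
  have huniq : ∀ g L, Tendsto (f · g) 𝒰 (𝓝 L) → σ g = L :=
    fun g L h => tendsto_nhds_unique (hσ g) h
  have hσadd : ∀ g h, σ (g + h) = σ g + σ h := fun g h =>
    huniq _ _ (((hσ g).add (hσ h)).congr' (((hadd g h).filter_mono h𝒰).mono fun _ => Eq.symm))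
  exact ⟨AddMonoidHom.mk' σ hσadd, fun g hg => ge_of_tendsto (hσ g) (h𝒰 (hpos g hg)),
    fun g L hL => huniq g L (hL.mono_left h𝒰)⟩

end StateOfLimit

lemma nonneg_of_forall_nsmul_add_mem {ι G : Type*} [AddCommGroup G] {l : Filter ι} [l.NeBot]
    {P : Set G} {σ : G →+ ℝ} (hσ : ∀ g ∈ P, 0 ≤ σ g) {L : ι → ℕ} (hL : Tendsto L l atTop)
    {a b : G} (h : ∀ i, L i • a + b ∈ P) : 0 ≤ σ a := by
  by_contra! hneg
  have hbot : Tendsto (fun i => (L i : ℝ) * σ a + σ b) l atBot :=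
    tendsto_atBot_add_const_right _ _
      ((tendsto_natCast_atTop_atTop.comp hL).atTop_mul_const_of_neg hneg)
  obtain ⟨i, hi⟩ := (hbot.eventually (eventually_lt_atBot 0)).exists
  have := hσ _ (h i)
  rw [map_add, map_nsmul, nsmul_eq_mul] at this
  linarith

abbrev LevelGroup (J : ℕ → ℕ) (n : ℕ) : Type := (Fin (J n) → ℤ) × (Fin (J n) → ℤ)

lemma LevelGroup.nonneg_iff {J : ℕ → ℕ} {n : ℕ} (x : LevelGroup J n) :
    0 ≤ x ↔ ∀ j, 0 ≤ x.1 j ∧ 0 ≤ x.2 j := by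
  simp only [Prod.le_def, Pi.le_def, Prod.fst_zero, Prod.snd_zero, Pi.zero_apply, forall_and]

section BlockPush

variable {J : ℕ → ℕ} {A : ∀ n, Fin 2 → Fin 2 → Fin (J (n+1)) → Fin (J n) → ℤ}

lemma blockStep_add (n : ℕ) (x y : LevelGroup J n) :
    blockStep J A n (x + y) = blockStep J A n x + blockStep J A n y := by
  ext j' <;>
  simp only [blockStep, Prod.fst_add, Prod.snd_add, Pi.add_apply, mul_add,
    ← Finset.sum_add_distrib] <;>
  exact Finset.sum_congr rfl fun j _ => by ring

variable (J A) in
def blockStepHom (n : ℕ) : LevelGroup J n →+ LevelGroup J (n + 1) :=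
  AddMonoidHom.mk' (blockStep J A n) (blockStep_add n)

lemma blockStep_nonneg (hA : ∀ n p q j' j, 0 ≤ A n p q j' j) {n : ℕ} {x : LevelGroup J n}
    (hx : 0 ≤ x) : 0 ≤ blockStep J A n x := by
  rw [LevelGroup.nonneg_iff] at hx ⊢
  intro j'
  dsimp only [blockStep]
  constructor <;>
  exact Finset.sum_nonneg fun j _ =>
    add_nonneg (mul_nonneg (hA ..) (hx j).1) (mul_nonneg (hA ..) (hx j).2)

lemma blockPush_nonneg (hA : ∀ n p q j' j, 0 ≤ A n p q j' j) (k : ℕ) {n : ℕ}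
    {x : LevelGroup J n} (hx : 0 ≤ x) : 0 ≤ blockPush J A k n x := by
  induction k with
  | zero => exact hx
  | succ k ih => exact blockStep_nonneg hA ih

variable (e : ∀ n, LevelGroup J n →+ ℤ)

variable (A) in
/-- `e` read off after pushing `d` levels up. Recursing on the first step, not the last as
`blockPush` does, keeps the level `n + d` out of the type. -/
def pushedCoord : (n d : ℕ) → LevelGroup J n →+ ℤ
  | n, 0 => e n
  | n, d + 1 => (pushedCoord (n + 1) d).comp (blockStepHom J A n)

lemma pushedCoord_add_steps (k d n : ℕ) (x : LevelGroup J n) :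
    pushedCoord A e n (k + d) x = pushedCoord A e (n + k) d (blockPush J A k n x) := by
  induction k generalizing d with
  | zero => rw [zero_add]; rfl
  | succ k ih => rw [show k + 1 + d = k + (d + 1) by omega, ih]; rfl

lemma pushedCoord_nonneg (hA : ∀ n p q j' j, 0 ≤ A n p q j' j)
    (he : ∀ n (x : LevelGroup J n), 0 ≤ x → 0 ≤ e n x) (d : ℕ) {n : ℕ} {x : LevelGroup J n}
    (hx : 0 ≤ x) : 0 ≤ pushedCoord A e n d x := by
  induction d generalizing n with
  | zero => exact he n x hx
  | succ d ih => exact ih (blockStep_nonneg hA hx)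

variable (A) in
def coordSeq (n : ℕ) (x : LevelGroup J n) (m : ℕ) : ℤ := pushedCoord A e n (m - n) x

lemma coordSeq_blockPush {n k m : ℕ} (hm : n + k ≤ m) (x : LevelGroup J n) :
    coordSeq A e (n + k) (blockPush J A k n x) m = coordSeq A e n x m := by
  rw [coordSeq, coordSeq, show m - n = k + (m - (n + k)) by omega, pushedCoord_add_steps]

lemma coordSeq_self (n : ℕ) (x : LevelGroup J n) : coordSeq A e n x n = e n x := by
  rw [coordSeq, Nat.sub_self]; rfl

lemma coordSeq_add (n : ℕ) (x y : LevelGroup J n) (m : ℕ) :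
    coordSeq A e n (x + y) m = coordSeq A e n x m + coordSeq A e n y m :=
  map_add _ x y

end BlockPush

section InductiveLimit

variable {J : ℕ → ℕ} {A : ∀ n, Fin 2 → Fin 2 → Fin (J (n+1)) → Fin (J n) → ℤ}
  {G : Type*} [AddCommGroup G] {η : ∀ n, LevelGroup J n →+ G}
  (e : ∀ n, LevelGroup J n →+ ℤ)

lemma eta_blockPush (hη : ∀ n x, η n x = η (n+1) (blockStep J A n x)) (k n : ℕ)
    (x : LevelGroup J n) : η (n + k) (blockPush J A k n x) = η n x := by
  induction k with
  | zero => rfl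
  | succ k ih => exact (hη _ _).symm.trans ih

lemma exists_lift (hη : ∀ n x, η n x = η (n+1) (blockStep J A n x)) {n c : ℕ} (h : n ≤ c)
    (x : LevelGroup J n) :
    ∃ y : LevelGroup J c, η c y = η n x ∧ ∀ m ≥ c, coordSeq A e c y m = coordSeq A e n x m := by
  obtain ⟨k, rfl⟩ := Nat.exists_eq_add_of_le h
  exact ⟨_, eta_blockPush hη k n x, fun m hm => coordSeq_blockPush e hm x⟩

lemma coordSeq_eventually_eq (hη : ∀ n x, η n x = η (n+1) (blockStep J A n x))
    (hker : ∀ n x, η n x = 0 → ∃ k, blockPush J A k n x = 0) {a b : ℕ} {x : LevelGroup J a}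
    {y : LevelGroup J b} (h : η a x = η b y) :
    ∀ᶠ m in atTop, coordSeq A e a x m = coordSeq A e b y m := by
  obtain ⟨x', hx', hxe⟩ := exists_lift e hη (le_max_left a b) x
  obtain ⟨y', hy', hye⟩ := exists_lift e hη (le_max_right a b) y
  obtain ⟨k, hk⟩ := hker _ (x' - y') (by rw [map_sub, hx', hy', h, sub_self])
  filter_upwards [eventually_ge_atTop (max a b + k)] with m hm
  have hzero : coordSeq A e _ (x' - y') m = 0 := by
    rw [← coordSeq_blockPush e hm, hk, coordSeq, map_zero]
  rw [coordSeq, map_sub, sub_eq_zero] at hzero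
  rw [← hxe m (by omega), ← hye m (by omega)]
  exact hzero

lemma exists_eventually_additive_coordSeq (hη : ∀ n x, η n x = η (n+1) (blockStep J A n x))
    (hker : ∀ n x, η n x = 0 → ∃ k, blockPush J A k n x = 0) (hsurj : ∀ g : G, ∃ n x, η n x = g) :
    ∃ F : G → ℕ → ℤ, (∀ g n x, η n x = g → ∀ᶠ m in atTop, F g m = coordSeq A e n x m) ∧
      ∀ g h, ∀ᶠ m in atTop, F (g + h) m = F g m + F h m := by
  choose lev rep hrep using hsurj
  have hF : ∀ g n x, η n x = g → ∀ᶠ m in atTop,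
      coordSeq A e (lev g) (rep g) m = coordSeq A e n x m := fun g n x h =>
    coordSeq_eventually_eq e hη hker ((hrep g).trans h.symm)
  refine ⟨fun g => coordSeq A e (lev g) (rep g), hF, fun g h => ?_⟩
  obtain ⟨x, hx, -⟩ := exists_lift e hη (le_max_left (lev g) (lev h)) (rep g)
  obtain ⟨y, hy, -⟩ := exists_lift e hη (le_max_right (lev g) (lev h)) (rep h)
  rw [hrep] at hx hy
  filter_upwards [hF _ _ (x + y) (by rw [map_add, hx, hy]), hF _ _ x hx, hF _ _ y hy]
    with m hxy hx' hy'
  rw [hxy, hx', hy', coordSeq_add]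

end InductiveLimit

/-- Condition 4 of Theorem 1.3 on one column of `[u¹; u²]`: its diagonal entry `d` is about `K`
and its off-diagonal entry `o` about `-K / l`, each up to a factor `r`. -/
structure ColumnBounds (r : ℚ) (K l : ℕ) (d o : ℤ) : Prop where
  r_pos : 0 < r
  r_lt_two : r < 2
  K_pos : 0 < K
  four_le_l : 4 ≤ l
  diag_ge : r⁻¹ * K ≤ d
  diag_le : d ≤ r * K
  off_ge : -(r * K) ≤ l * o
  off_le : l * o ≤ -(r⁻¹ * K)

namespace ColumnBounds

variable {r : ℚ} {K l : ℕ} {d o : ℤ}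

lemma le_r_mul_diag (h : ColumnBounds r K l d o) : (K : ℚ) ≤ r * d :=
  (inv_mul_le_iff₀ h.r_pos).1 h.diag_ge

lemma add_pos (h : ColumnBounds r K l d o) : 0 < d + o := by
  have hK : (0 : ℚ) < K := by exact_mod_cast h.K_pos
  have hl : (4 : ℚ) ≤ l := by exact_mod_cast h.four_le_l
  have hd := mul_le_mul_of_nonneg_left h.le_r_mul_diag (by positivity : (0 : ℚ) ≤ l)
  have ho := mul_le_mul_of_nonneg_left h.off_ge h.r_pos.le
  have hscale := mul_pos hK (by nlinarith [h.r_pos, h.r_lt_two] : 0 < (l : ℚ) - r * r)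
  have key : 0 < r * l * ((d : ℚ) + o) := by linear_combination hd + ho + hscale
  exact_mod_cast pos_of_mul_pos_right key (mul_pos h.r_pos (by positivity)).le

lemma l_mul_add_four_mul_nonneg (h : ColumnBounds r K l d o) : 0 ≤ l * d + 4 * o := by
  have hK : (0 : ℚ) < K := by exact_mod_cast h.K_pos
  have hl : (4 : ℚ) ≤ l := by exact_mod_cast h.four_le_l
  have hd := mul_le_mul_of_nonneg_left h.le_r_mul_diag (by positivity : (0 : ℚ) ≤ l * l)
  have ho := mul_le_mul_of_nonneg_left h.off_ge (by linarith [h.r_pos] : (0 : ℚ) ≤ 4 * r)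
  have hscale := mul_nonneg hK.le
    (by nlinarith [h.r_pos, h.r_lt_two] : 0 ≤ (l : ℚ) * l - 4 * r * r)
  have key : 0 ≤ r * l * ((l : ℚ) * d + 4 * o) := by linear_combination hd + ho + hscale
  exact_mod_cast nonneg_of_mul_nonneg_right key (mul_pos h.r_pos (by positivity))

lemma four_mul_add_l_mul_nonneg (h : ColumnBounds r K l d o) : 0 ≤ 4 * d + l * o := by
  have hK : (0 : ℚ) < K := by exact_mod_cast h.K_pos
  have ho := mul_le_mul_of_nonneg_left h.off_ge h.r_pos.le
  have hscale := mul_nonneg hK.le (by nlinarith [h.r_pos, h.r_lt_two] : 0 ≤ 4 - r * r)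
  have key : 0 ≤ r * (4 * (d : ℚ) + l * o) := by
    linear_combination 4 * h.le_r_mul_diag + ho + hscale
  exact_mod_cast nonneg_of_mul_nonneg_right key h.r_pos

lemma abs_l_mul_off_le (h : ColumnBounds r K l d o) : |(l : ℝ) * o| ≤ 2 * K := by
  have hK : (0 : ℚ) ≤ K := by exact_mod_cast h.K_pos.le
  have h0 : (0 : ℚ) ≤ r⁻¹ * K := mul_nonneg (inv_nonneg.2 h.r_pos.le) hK
  have hq : |(l : ℚ) * o| ≤ 2 * K :=
    abs_le.2 ⟨by nlinarith [h.off_ge, h.r_lt_two], by linarith [h.off_le]⟩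
  exact_mod_cast hq

end ColumnBounds

lemma tendsto_div_of_columnBounds {r : ℕ → ℚ} {K l : ℕ → ℕ} {d o : ℕ → ℤ}
    (h : ∀ n, ColumnBounds (r n) (K n) (l n) (d n) (o n)) (hr : Tendsto r atTop (𝓝 1)) :
    Tendsto (fun n => (d n : ℝ) / K n) atTop (𝓝 1) := by
  have hrR : Tendsto (fun n => (r n : ℝ)) atTop (𝓝 1) :=
    (Rat.continuous_coe_real.tendsto' 1 1 Rat.cast_one).comp hr
  have hK : ∀ n, (0 : ℝ) < K n := fun n => by exact_mod_cast (h n).K_pos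
  refine tendsto_of_tendsto_of_tendsto_of_le_of_le (by simpa using hrR.inv₀ one_ne_zero) hrR
    (fun n => ?_) (fun n => ?_)
  · rw [le_div_iff₀ (hK n)]; exact_mod_cast (h n).diag_ge
  · rw [div_le_iff₀ (hK n)]; exact_mod_cast (h n).diag_le

lemma tendsto_off_div_of_columnBounds {r : ℕ → ℚ} {K l : ℕ → ℕ} {d o : ℕ → ℤ}
    (h : ∀ n, ColumnBounds (r n) (K n) (l n) (d n) (o n)) (hl : Tendsto l atTop atTop) :
    Tendsto (fun n => (o n : ℝ) / K n) atTop (𝓝 0) := by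
  have hlR : Tendsto (fun n => (l n : ℝ)) atTop atTop :=
    tendsto_natCast_atTop_atTop.comp hl
  refine squeeze_zero_norm' ?_ (tendsto_const_nhds (x := (2 : ℝ)) |>.div_atTop hlR)
  filter_upwards [hlR.eventually_gt_atTop 0] with n hn
  have hK : (0 : ℝ) < K n := by exact_mod_cast (h n).K_pos
  rw [Real.norm_eq_abs, abs_div, abs_of_pos hK, div_le_div_iff₀ hK hn]
  have := (h n).abs_l_mul_off_le
  rw [abs_mul, abs_of_pos hn] at this
  linarith

section States

variable {J : ℕ → ℕ} {A : ∀ n, Fin 2 → Fin 2 → Fin (J (n+1)) → Fin (J n) → ℤ}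
  {u : ∀ n, Fin 2 → Fin 2 → Fin (J n) → ℤ} {G : Type*} [AddCommGroup G]
  {η : ∀ n, LevelGroup J n →+ G} {P : Set G} {U1 U2 : G} {r : ℕ → ℚ} {K l : ℕ → ℕ}

lemma blockPush_uPair (hcompat : ∀ n (i p : Fin 2) (j' : Fin (J (n+1))),
      u (n+1) i p j' = ∑ j, (A n p 0 j' j * u n i 0 j + A n p 1 j' j * u n i 1 j))
    (i : Fin 2) (k n : ℕ) :
    blockPush J A k n (u n i 0, u n i 1) = (u (n + k) i 0, u (n + k) i 1) := by
  induction k with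
  | zero => rfl
  | succ k ih =>
    change blockStep J A (n + k) (blockPush J A k n _) = _
    rw [ih]
    ext j' <;> exact (hcompat _ i _ j').symm

lemma coordSeq_uPair (hcompat : ∀ n (i p : Fin 2) (j' : Fin (J (n+1))),
      u (n+1) i p j' = ∑ j, (A n p 0 j' j * u n i 0 j + A n p 1 j' j * u n i 1 j))
    (e : ∀ n, LevelGroup J n →+ ℤ) (i : Fin 2) {n m : ℕ} (h : n ≤ m) :
    coordSeq A e n (u n i 0, u n i 1) m = e m (u m i 0, u m i 1) := by
  obtain ⟨k, rfl⟩ := Nat.exists_eq_add_of_le h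
  rw [← coordSeq_blockPush e le_rfl, blockPush_uPair hcompat, coordSeq_self]

lemma eta_mem_of_nonneg (hP : P = {g : G | ∃ n x, (∀ j, 0 ≤ x.1 j ∧ 0 ≤ x.2 j) ∧ η n x = g})
    {n : ℕ} {x : LevelGroup J n} (hx : 0 ≤ x) : η n x ∈ P := by
  rw [hP]
  exact ⟨n, x, (LevelGroup.nonneg_iff x).1 hx, rfl⟩

lemma nsmul_add_nsmul_mem (hP : P = {g : G | ∃ n x, (∀ j, 0 ≤ x.1 j ∧ 0 ≤ x.2 j) ∧ η n x = g})
    {n : ℕ} (hU1 : η n (u n 0 0, u n 0 1) = U1) (hU2 : η n (u n 1 0, u n 1 1) = U2) {a b : ℕ}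
    (h : ∀ j, 0 ≤ a * u n 0 0 j + b * u n 1 0 j ∧ 0 ≤ b * u n 1 1 j + a * u n 0 1 j) :
    a • U1 + b • U2 ∈ P := by
  rw [← hU1, ← hU2, ← map_nsmul, ← map_nsmul, ← map_add]
  refine eta_mem_of_nonneg hP ((LevelGroup.nonneg_iff _).2 fun j => ?_)
  simp only [Prod.fst_add, Prod.snd_add, Prod.smul_fst, Prod.smul_snd, Pi.add_apply,
    Pi.smul_apply]
  simp only [nsmul_eq_mul]
  exact ⟨(h j).1, by linarith [(h j).2]⟩

lemma isOrderUnit_of_one_le (hP : P = {g : G | ∃ n x, (∀ j, 0 ≤ x.1 j ∧ 0 ≤ x.2 j) ∧ η n x = g})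
    (hsurj : ∀ g : G, ∃ n x, η n x = g) {U : G} (w : ∀ n, LevelGroup J n)
    (hw : ∀ n j, 1 ≤ (w n).1 j ∧ 1 ≤ (w n).2 j) (hU : ∀ n, η n (w n) = U) : IsOrderUnit P U := by
  refine ⟨hU 0 ▸ eta_mem_of_nonneg hP ((LevelGroup.nonneg_iff _).2 fun j =>
    ⟨zero_le_one.trans (hw 0 j).1, zero_le_one.trans (hw 0 j).2⟩), fun g => ?_⟩
  obtain ⟨n, x, rfl⟩ := hsurj g
  set N := ∑ j, ((x.1 j).natAbs + (x.2 j).natAbs)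
  refine ⟨N + 1, N.succ_pos, ?_⟩
  rw [← hU n, ← map_nsmul, ← map_sub]
  refine eta_mem_of_nonneg hP ((LevelGroup.nonneg_iff _).2 fun j => ?_)
  have hN : (x.1 j).natAbs + (x.2 j).natAbs ≤ N :=
    Finset.single_le_sum (f := fun j => (x.1 j).natAbs + (x.2 j).natAbs)
      (fun _ _ => Nat.zero_le _) (Finset.mem_univ j)
  simp only [Prod.fst_sub, Prod.snd_sub, Prod.smul_fst, Prod.smul_snd, Pi.sub_apply,
    Pi.smul_apply, sub_nonneg]
  simp only [nsmul_eq_mul]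
  push_cast
  constructor <;> nlinarith [(hw n j).1, (hw n j).2, Int.le_natAbs (a := x.1 j),
    Int.le_natAbs (a := x.2 j), (by exact_mod_cast hN : ((x.1 j).natAbs + (x.2 j).natAbs : ℤ) ≤ N)]

lemma isOrderUnit_add (hP : P = {g : G | ∃ n x, (∀ j, 0 ≤ x.1 j ∧ 0 ≤ x.2 j) ∧ η n x = g})
    (hsurj : ∀ g : G, ∃ n x, η n x = g)
    (hU1 : ∀ n, η n (u n 0 0, u n 0 1) = U1) (hU2 : ∀ n, η n (u n 1 0, u n 1 1) = U2)
    (hcol : ∀ n j, ColumnBounds (r n) (K n) (l n) (u n 0 0 j) (u n 1 0 j) ∧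
      ColumnBounds (r n) (K n) (l n) (u n 1 1 j) (u n 0 1 j)) :
    IsOrderUnit P (U1 + U2) := by
  refine isOrderUnit_of_one_le hP hsurj (fun n => (u n 0 0, u n 0 1) + (u n 1 0, u n 1 1))
    (fun n j => ?_) (fun n => by rw [map_add, hU1, hU2])
  have h₀ := (hcol n j).1.add_pos
  have h₁ := (hcol n j).2.add_pos
  dsimp only [Prod.fst_add, Prod.snd_add, Pi.add_apply]
  omega

lemma nonneg_U1_U2 (hP : P = {g : G | ∃ n x, (∀ j, 0 ≤ x.1 j ∧ 0 ≤ x.2 j) ∧ η n x = g})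
    (hU1 : ∀ n, η n (u n 0 0, u n 0 1) = U1) (hU2 : ∀ n, η n (u n 1 0, u n 1 1) = U2)
    (hcol : ∀ n j, ColumnBounds (r n) (K n) (l n) (u n 0 0 j) (u n 1 0 j) ∧
      ColumnBounds (r n) (K n) (l n) (u n 1 1 j) (u n 0 1 j))
    (hl : Tendsto l atTop atTop) {σ : G →+ ℝ} (hσ : ∀ g ∈ P, 0 ≤ σ g) :
    0 ≤ σ U1 ∧ 0 ≤ σ U2 := by
  constructor
  · refine nonneg_of_forall_nsmul_add_mem hσ hl (b := 4 • U2) fun n =>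
      nsmul_add_nsmul_mem hP (hU1 n) (hU2 n) fun j => ?_
    exact ⟨(hcol n j).1.l_mul_add_four_mul_nonneg, (hcol n j).2.four_mul_add_l_mul_nonneg⟩
  · refine nonneg_of_forall_nsmul_add_mem hσ hl (b := 4 • U1) fun n =>
      add_comm (4 • U1) (l n • U2) ▸ nsmul_add_nsmul_mem hP (hU1 n) (hU2 n) fun j => ?_
    exact ⟨(hcol n j).1.four_mul_add_l_mul_nonneg, (hcol n j).2.l_mul_add_four_mul_nonneg⟩

theorem exists_state_of_tendsto (hA : ∀ n p q j' j, 0 ≤ A n p q j' j)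
    (hcompat : ∀ n (i p : Fin 2) (j' : Fin (J (n+1))),
      u (n+1) i p j' = ∑ j, (A n p 0 j' j * u n i 0 j + A n p 1 j' j * u n i 1 j))
    (hη : ∀ n x, η n x = η (n+1) (blockStep J A n x)) (hsurj : ∀ g : G, ∃ n x, η n x = g)
    (hker : ∀ n x, η n x = 0 → ∃ k, blockPush J A k n x = 0)
    (hP : P = {g : G | ∃ n x, (∀ j, 0 ≤ x.1 j ∧ 0 ≤ x.2 j) ∧ η n x = g})
    (hU1 : η 0 (u 0 0 0, u 0 0 1) = U1) (hU2 : η 0 (u 0 1 0, u 0 1 1) = U2)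
    (hunit : IsOrderUnit P (U1 + U2)) {s : ℕ → ℝ} (hs : ∀ m, 0 < s m)
    (e : ∀ n, LevelGroup J n →+ ℤ) (he : ∀ n x, 0 ≤ x → 0 ≤ e n x) {L₁ L₂ : ℝ}
    (hL : L₁ + L₂ = 1)
    (h₁ : Tendsto (fun m => (e m (u m 0 0, u m 0 1) : ℝ) / s m) atTop (𝓝 L₁))
    (h₂ : Tendsto (fun m => (e m (u m 1 0, u m 1 1) : ℝ) / s m) atTop (𝓝 L₂)) :
    ∃ σ : G →+ ℝ, IsState P (U1 + U2) σ ∧ σ U1 = L₁ ∧ σ U2 = L₂ := by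
  obtain ⟨F, hFrep, hFadd⟩ := exists_eventually_additive_coordSeq e hη hker hsurj
  let f : ℕ → G → ℝ := fun m g => (F g m : ℝ) / s m
  have hfadd : ∀ g h, ∀ᶠ m in atTop, f m (g + h) = f m g + f m h := fun g h =>
    (hFadd g h).mono fun m hm => by simp only [f, hm, Int.cast_add, add_div]
  have hfpos : ∀ g ∈ P, ∀ᶠ m in atTop, 0 ≤ f m g := by
    rintro g hg
    rw [hP] at hg
    obtain ⟨n, x, hx, rfl⟩ := hg
    filter_upwards [hFrep _ n x rfl] with m hm
    have := pushedCoord_nonneg e hA he (m - n) ((LevelGroup.nonneg_iff x).2 hx)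
    exact div_nonneg (by rw [hm]; exact_mod_cast this) (hs m).le
  have hlim : ∀ {i : Fin 2} {U : G} {L : ℝ}, η 0 (u 0 i 0, u 0 i 1) = U →
      Tendsto (fun m => (e m (u m i 0, u m i 1) : ℝ) / s m) atTop (𝓝 L) →
      Tendsto (f · U) atTop (𝓝 L) := fun hU h =>
    h.congr' ((hFrep _ 0 _ hU).mono fun m hm => by
      simp only [f, hm, coordSeq_uPair hcompat e _ (Nat.zero_le m)])
  have hf₁ := hlim hU1 h₁
  have hf₂ := hlim hU2 h₂
  obtain ⟨σ, hσpos, hσ⟩ := exists_addMonoidHom_of_eventually_additive hunit hfadd hfpos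
    ((hf₁.add hf₂).congr' ((hfadd U1 U2).mono fun _ h => h.symm)).isBoundedUnder_le
  refine ⟨σ, ⟨hσpos, ?_⟩, hσ _ _ hf₁, hσ _ _ hf₂⟩
  rw [map_add, hσ _ _ hf₁, hσ _ _ hf₂, hL]

end States

theorem stmt9_general
    (J : ℕ → ℕ) (hJ : ∀ n, 0 < J n)
    (u : ∀ n, Fin 2 → Fin 2 → Fin (J n) → ℤ)
    (A : ∀ n, Fin 2 → Fin 2 → Fin (J (n+1)) → Fin (J n) → ℤ)
    (hA : ∀ n (p q : Fin 2) j' j, 0 < A n p q j' j)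
    (hcompat : ∀ n (i p : Fin 2) (j' : Fin (J (n+1))),
      u (n+1) i p j' = ∑ j, (A n p 0 j' j * u n i 0 j + A n p 1 j' j * u n i 1 j))
    (r : ℕ → ℚ) (hr1 : ∀ n, 1 < r n) (hr2 : ∀ n, r n < 2)
    (hrlim : Filter.Tendsto r Filter.atTop (nhds 1))
    (K l : ℕ → ℕ) (hl : StrictMono l)
    (hK4 : ∀ n, 4 ≤ K n) (hl4 : ∀ n, 4 ≤ l n)
    (hcond4 : ∀ n (j : Fin (J n)),
      ((r n)⁻¹ * K n ≤ (u n 0 0 j : ℚ) ∧ (u n 0 0 j : ℚ) ≤ r n * K n) ∧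
      ((r n)⁻¹ * K n ≤ (u n 1 1 j : ℚ) ∧ (u n 1 1 j : ℚ) ≤ r n * K n) ∧
      (-(r n * K n) ≤ (l n : ℚ) * u n 0 1 j ∧ (l n : ℚ) * u n 0 1 j ≤ -((r n)⁻¹ * K n)) ∧
      (-(r n * K n) ≤ (l n : ℚ) * u n 1 0 j ∧ (l n : ℚ) * u n 1 0 j ≤ -((r n)⁻¹ * K n)))
    {G : Type*} [AddCommGroup G]
    (η : ∀ n, ((Fin (J n) → ℤ) × (Fin (J n) → ℤ)) →+ G)
    (hηcompat : ∀ n x, η n x = η (n+1) (blockStep J A n x))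
    (hsurj : ∀ g : G, ∃ n x, η n x = g)
    (hker : ∀ n x, η n x = 0 → ∃ k, blockPush J A k n x = 0)
    (P : Set G)
    (hP : P = {g : G | ∃ n x, (∀ j, 0 ≤ x.1 j ∧ 0 ≤ x.2 j) ∧ η n x = g})
    (U1 U2 : G)
    (hU1 : ∀ n, η n (u n 0 0, u n 0 1) = U1)
    (hU2 : ∀ n, η n (u n 1 0, u n 1 1) = U2)
    :
    (∀ σ : G →+ ℝ, IsState P (U1 + U2) σ → 0 ≤ σ U1 ∧ 0 ≤ σ U2) ∧
    ∃ σ₁ σ₂ : G →+ ℝ, IsState P (U1 + U2) σ₁ ∧ IsState P (U1 + U2) σ₂ ∧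
      σ₁ U1 = 1 ∧ σ₂ U2 = 1 ∧ σ₁ U2 = 0 ∧ σ₂ U1 = 0 := by
  have hcol : ∀ n j, ColumnBounds (r n) (K n) (l n) (u n 0 0 j) (u n 1 0 j) ∧
      ColumnBounds (r n) (K n) (l n) (u n 1 1 j) (u n 0 1 j) := fun n j =>
    have hr0 := zero_lt_one.trans (hr1 n)
    have hK0 : 0 < K n := by linarith [hK4 n]
    let ⟨⟨h₁, h₂⟩, ⟨h₃, h₄⟩, ⟨h₅, h₆⟩, ⟨h₇, h₈⟩⟩ := hcond4 n j
    ⟨⟨hr0, hr2 n, hK0, hl4 n, h₁, h₂, h₇, h₈⟩, ⟨hr0, hr2 n, hK0, hl4 n, h₃, h₄, h₅, h₆⟩⟩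
  have hl' := hl.tendsto_atTop
  have hunit := isOrderUnit_add hP hsurj hU1 hU2 hcol
  refine ⟨fun σ hσ => nonneg_U1_U2 hP hU1 hU2 hcol hl' hσ.1, ?_⟩
  have hK : ∀ m, (0 : ℝ) < K m := fun m => by exact_mod_cast (hcol m ⟨0, hJ m⟩).1.K_pos
  let j : ∀ n, Fin (J n) := fun n => ⟨0, hJ n⟩
  have hstate := exists_state_of_tendsto (fun n p q j' j => (hA n p q j' j).le) hcompat
    hηcompat hsurj hker hP (hU1 0) (hU2 0) hunit hK
  obtain ⟨σ₁, hσ₁, h₁₁, h₁₂⟩ := hstate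
    (fun n => (Pi.evalAddMonoidHom _ (j n)).comp (AddMonoidHom.fst _ _)) (fun n x hx => hx.1 (j n))
    (add_zero 1) (tendsto_div_of_columnBounds (fun n => (hcol n (j n)).1) hrlim)
    (tendsto_off_div_of_columnBounds (fun n => (hcol n (j n)).1) hl')
  obtain ⟨σ₂, hσ₂, h₂₁, h₂₂⟩ := hstate
    (fun n => (Pi.evalAddMonoidHom _ (j n)).comp (AddMonoidHom.snd _ _)) (fun n x hx => hx.2 (j n))
    (zero_add 1) (tendsto_off_div_of_columnBounds (fun n => (hcol n (j n)).2) hl')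
    (tendsto_div_of_columnBounds (fun n => (hcol n (j n)).2) hrlim)
  exact ⟨σ₁, σ₂, hσ₁, hσ₂, h₁₁, h₂₂, h₁₂, h₂₁⟩

/-- Lemma 2.1: every state of the inductive limit `(G, G⁺)` of Theorem 1.3
is nonnegative on `u¹` and `u²`, and there are states `σ₁, σ₂` with
`σ₁(u¹) = σ₂(u²) = 1` and `σ₁(u²) = σ₂(u¹) = 0`. -/
theorem stmt9
    (J : ℕ → ℕ) (hJ : ∀ n, 0 < J n)
    (u : ∀ n, Fin 2 → Fin 2 → Fin (J n) → ℤ)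
    (A : ∀ n, Fin 2 → Fin 2 → Fin (J (n+1)) → Fin (J n) → ℤ)
    (hA : ∀ n (p q : Fin 2) j' j, 0 < A n p q j' j)
    (hcompat : ∀ n (i p : Fin 2) (j' : Fin (J (n+1))),
      u (n+1) i p j' = ∑ j, (A n p 0 j' j * u n i 0 j + A n p 1 j' j * u n i 1 j))
    (r : ℕ → ℚ) (hr1 : ∀ n, 1 < r n) (hr2 : ∀ n, r n < 2)
    (hrmono : ∀ n, r (n+1) ≤ r n)
    (hrlim : Filter.Tendsto r Filter.atTop (nhds 1))
    (K l : ℕ → ℕ) (hK : StrictMono K) (hl : StrictMono l)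
    (hK4 : ∀ n, 4 ≤ K n) (hl4 : ∀ n, 4 ≤ l n)
    (hcond4 : ∀ n (j : Fin (J n)),
      ((r n)⁻¹ * K n ≤ (u n 0 0 j : ℚ) ∧ (u n 0 0 j : ℚ) ≤ r n * K n) ∧
      ((r n)⁻¹ * K n ≤ (u n 1 1 j : ℚ) ∧ (u n 1 1 j : ℚ) ≤ r n * K n) ∧
      (-(r n * K n) ≤ (l n : ℚ) * u n 0 1 j ∧ (l n : ℚ) * u n 0 1 j ≤ -((r n)⁻¹ * K n)) ∧
      (-(r n * K n) ≤ (l n : ℚ) * u n 1 0 j ∧ (l n : ℚ) * u n 1 0 j ≤ -((r n)⁻¹ * K n)))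
    (hcond5 : ∀ n (j' j'' : Fin (J (n+1))) (j : Fin (J n)),
      ((r n)⁻¹ * A n 0 0 j' j ≤ (l n : ℚ) * A n 1 0 j'' j ∧
        (l n : ℚ) * A n 1 0 j'' j ≤ r n * A n 0 0 j' j) ∧
      ((r n)⁻¹ * A n 1 1 j' j ≤ (l n : ℚ) * A n 0 1 j'' j ∧
        (l n : ℚ) * A n 0 1 j'' j ≤ r n * A n 1 1 j' j))
    {G : Type*} [AddCommGroup G]
    (η : ∀ n, ((Fin (J n) → ℤ) × (Fin (J n) → ℤ)) →+ G)
    (hηcompat : ∀ n x, η n x = η (n+1) (blockStep J A n x))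
    (hsurj : ∀ g : G, ∃ n x, η n x = g)
    (hker : ∀ n x, η n x = 0 → ∃ k, blockPush J A k n x = 0)
    (P : Set G)
    (hP : P = {g : G | ∃ n x, (∀ j, 0 ≤ x.1 j ∧ 0 ≤ x.2 j) ∧ η n x = g})
    (U1 U2 : G)
    (hU1 : ∀ n, η n (u n 0 0, u n 0 1) = U1)
    (hU2 : ∀ n, η n (u n 1 0, u n 1 1) = U2)
    :
    (∀ σ : G →+ ℝ, IsState P (U1 + U2) σ → 0 ≤ σ U1 ∧ 0 ≤ σ U2) ∧
    ∃ σ₁ σ₂ : G →+ ℝ, IsState P (U1 + U2) σ₁ ∧ IsState P (U1 + U2) σ₂ ∧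
      σ₁ U1 = 1 ∧ σ₂ U2 = 1 ∧ σ₁ U2 = 0 ∧ σ₂ U1 = 0 :=
  stmt9_general J hJ u A hA hcompat r hr1 hr2 hrlim K l hl hK4 hl4 hcond4 η hηcompat hsurj hker P hP
    U1 U2 hU1 hU2
end

section
/- Under the hypotheses of Theorem 1.3, let n ≥ 1 and x¹, x² ∈ ℤ^{J_n} with (0,0) ≤ (x¹,x²) ≤ C u_n for some C > 0, and set (y¹,y²) equal to the image of (x¹,x²) under the block matrix [[A_n^{1,1}, A_n^{1,2}],[A_n^{2,1}, A_n^{2,2}]]. Define Xⁱ = Σⱼ A_n^{i,i}(1,j)xⁱ(j). Then coordinatewise r_n⁻²(X¹ + l_n⁻¹X²) ≤ y¹ ≤ r_n²(X¹ + l_n⁻¹X²) and r_n⁻²(l_n⁻¹X¹ + X²) ≤ y² ≤ r_n²(l_n⁻¹X¹ + X²). -/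
open scoped BigOperators

private lemma div_sq_le (q a b : ℚ) (hq : 0 < q) (h : q⁻¹ * a ≤ q * b) :
    q⁻¹ ^ 2 * a ≤ b := by
  have h' := mul_le_mul_of_nonneg_left h (inv_nonneg.2 hq.le)
  calc q⁻¹ ^ 2 * a = q⁻¹ * (q⁻¹ * a) := by ring
    _ ≤ q⁻¹ * (q * b) := h'
    _ = b := by field_simp

private lemma le_sq_mul (q a b : ℚ) (hq : 0 < q) (h : q⁻¹ * a ≤ q * b) :
    a ≤ q ^ 2 * b := by
  have h' := mul_le_mul_of_nonneg_left h hq.le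
  calc a = q * (q⁻¹ * a) := by field_simp
    _ ≤ q * (q * b) := h'
    _ = q ^ 2 * b := by ring

private lemma le_qinvLinv (L q b c : ℚ) (hL : 0 < L) (h : q⁻¹ * b ≤ L * c) :
    q⁻¹ * L⁻¹ * b ≤ c := by
  have h' := mul_le_mul_of_nonneg_left h (inv_nonneg.2 hL.le)
  calc q⁻¹ * L⁻¹ * b = L⁻¹ * (q⁻¹ * b) := by ring
    _ ≤ L⁻¹ * (L * c) := h'
    _ = c := by field_simp

private lemma qLinv_le (L q b c : ℚ) (hL : 0 < L) (h : L * c ≤ q * b) :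
    c ≤ q * L⁻¹ * b := by
  have h' := mul_le_mul_of_nonneg_left h (inv_nonneg.2 hL.le)
  calc c = L⁻¹ * (L * c) := by field_simp
    _ ≤ L⁻¹ * (q * b) := h'
    _ = q * L⁻¹ * b := by ring

private lemma sum_comb {m : ℕ} (c d : ℚ) (f g : Fin m → ℚ) :
    c * (∑ j, f j + d * ∑ j, g j) = ∑ j, (c * f j + c * d * g j) := by
  have h : ∑ j, (c * f j + c * d * g j) = ∑ j, c * f j + ∑ j, c * d * g j :=
    Finset.sum_add_distrib
  rw [h, ← Finset.mul_sum, ← Finset.mul_sum]; ring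

private lemma sum_comb' {m : ℕ} (c d : ℚ) (f g : Fin m → ℚ) :
    c * (d * ∑ j, f j + ∑ j, g j) = ∑ j, (c * g j + c * d * f j) := by
  have h : ∑ j, (c * g j + c * d * f j) = ∑ j, c * g j + ∑ j, c * d * f j :=
    Finset.sum_add_distrib
  rw [h, ← Finset.mul_sum, ← Finset.mul_sum]; ring

private lemma term_bounds (q L a a0 c b0 x1 x2 : ℚ)
    (hq : 1 < q) (hL : 0 < L) (hx1 : 0 ≤ x1) (hx2 : 0 ≤ x2)
    (hb0 : 0 ≤ b0) (ha0 : 0 ≤ a0)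
    (hal : q⁻¹ ^ 2 * a0 ≤ a) (hau : a ≤ q ^ 2 * a0)
    (hcl : q⁻¹ * L⁻¹ * b0 ≤ c) (hcu : c ≤ q * L⁻¹ * b0) :
    q⁻¹ ^ 2 * (a0 * x1) + q⁻¹ ^ 2 * L⁻¹ * (b0 * x2) ≤ a * x1 + c * x2 ∧
    a * x1 + c * x2 ≤ q ^ 2 * (a0 * x1) + q ^ 2 * L⁻¹ * (b0 * x2) := by
  have hq0 : 0 < q := lt_trans one_pos hq
  have hqinv : q⁻¹ < 1 := by
    rw [inv_lt_one_iff₀]; right; exact hq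
  have hqinv0 : 0 < q⁻¹ := inv_pos.2 hq0
  have hLinv : 0 ≤ L⁻¹ := (inv_pos.2 hL).le
  have hbx : 0 ≤ L⁻¹ * (b0 * x2) := mul_nonneg hLinv (mul_nonneg hb0 hx2)
  have e1 := mul_le_mul_of_nonneg_right hal hx1
  have e2 := mul_le_mul_of_nonneg_right hau hx1
  have e3 := mul_le_mul_of_nonneg_right hcl hx2
  have e4 := mul_le_mul_of_nonneg_right hcu hx2
  have hsq1 : q⁻¹ ^ 2 ≤ q⁻¹ := by nlinarith
  have hsq2 : q ≤ q ^ 2 := by nlinarith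
  have f1 : q⁻¹ ^ 2 * (L⁻¹ * (b0 * x2)) ≤ q⁻¹ * (L⁻¹ * (b0 * x2)) :=
    mul_le_mul_of_nonneg_right hsq1 hbx
  have f2 : q * (L⁻¹ * (b0 * x2)) ≤ q ^ 2 * (L⁻¹ * (b0 * x2)) :=
    mul_le_mul_of_nonneg_right hsq2 hbx
  constructor <;> nlinarith [e1, e2, e3, e4, f1, f2]

/-- coordinatewise bounds on the image `(y¹,y²)` of a positive element
`(x¹,x²) ≤ C uₙ` under the block matrix, in terms of `X¹, X²`. -/
theorem stmt10
    (J : ℕ → ℕ) (hJ : ∀ n, 0 < J n)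
    (u : ∀ n, Fin 2 → Fin 2 → Fin (J n) → ℤ)
    (A : ∀ n, Fin 2 → Fin 2 → Fin (J (n+1)) → Fin (J n) → ℤ)
    (hA : ∀ n (p q : Fin 2) j' j, 0 < A n p q j' j)
    (hcompat : ∀ n (i p : Fin 2) (j' : Fin (J (n+1))),
      u (n+1) i p j' = ∑ j, (A n p 0 j' j * u n i 0 j + A n p 1 j' j * u n i 1 j))
    (r : ℕ → ℚ) (hr1 : ∀ n, 1 < r n) (hr2 : ∀ n, r n < 2)
    (hrmono : ∀ n, r (n+1) ≤ r n)
    (hrlim : Filter.Tendsto r Filter.atTop (nhds 1))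
    (K l : ℕ → ℕ) (hK : StrictMono K) (hl : StrictMono l)
    (hK4 : ∀ n, 4 ≤ K n) (hl4 : ∀ n, 4 ≤ l n)
    (hcond4 : ∀ n (j : Fin (J n)),
      ((r n)⁻¹ * K n ≤ (u n 0 0 j : ℚ) ∧ (u n 0 0 j : ℚ) ≤ r n * K n) ∧
      ((r n)⁻¹ * K n ≤ (u n 1 1 j : ℚ) ∧ (u n 1 1 j : ℚ) ≤ r n * K n) ∧
      (-(r n * K n) ≤ (l n : ℚ) * u n 0 1 j ∧ (l n : ℚ) * u n 0 1 j ≤ -((r n)⁻¹ * K n)) ∧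
      (-(r n * K n) ≤ (l n : ℚ) * u n 1 0 j ∧ (l n : ℚ) * u n 1 0 j ≤ -((r n)⁻¹ * K n)))
    (hcond5 : ∀ n (j' j'' : Fin (J (n+1))) (j : Fin (J n)),
      ((r n)⁻¹ * A n 0 0 j' j ≤ (l n : ℚ) * A n 1 0 j'' j ∧
        (l n : ℚ) * A n 1 0 j'' j ≤ r n * A n 0 0 j' j) ∧
      ((r n)⁻¹ * A n 1 1 j' j ≤ (l n : ℚ) * A n 0 1 j'' j ∧
        (l n : ℚ) * A n 0 1 j'' j ≤ r n * A n 1 1 j' j))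
    (n : ℕ) (x1 x2 : Fin (J n) → ℤ) (C : ℚ) (hC : 0 < C)
    (hxpos : ∀ j, 0 ≤ x1 j ∧ 0 ≤ x2 j)
    (hxle : ∀ j, (x1 j : ℚ) ≤ C * ((u n 0 0 j : ℚ) + (u n 1 0 j : ℚ)) ∧
                 (x2 j : ℚ) ≤ C * ((u n 0 1 j : ℚ) + (u n 1 1 j : ℚ)))
    (y1 y2 : Fin (J (n+1)) → ℤ)
    (hy1 : ∀ j', y1 j' = ∑ j, (A n 0 0 j' j * x1 j + A n 0 1 j' j * x2 j))
    (hy2 : ∀ j', y2 j' = ∑ j, (A n 1 0 j' j * x1 j + A n 1 1 j' j * x2 j))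
    (X1 X2 : ℤ)
    (hX1 : X1 = ∑ j, A n 0 0 ⟨0, hJ (n+1)⟩ j * x1 j)
    (hX2 : X2 = ∑ j, A n 1 1 ⟨0, hJ (n+1)⟩ j * x2 j) :
    ∀ j' : Fin (J (n+1)),
      (((r n)⁻¹ ^ 2 * ((X1 : ℚ) + (l n : ℚ)⁻¹ * X2) ≤ (y1 j' : ℚ)) ∧
        ((y1 j' : ℚ) ≤ (r n) ^ 2 * ((X1 : ℚ) + (l n : ℚ)⁻¹ * X2))) ∧
      (((r n)⁻¹ ^ 2 * ((l n : ℚ)⁻¹ * X1 + (X2 : ℚ)) ≤ (y2 j' : ℚ)) ∧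
        ((y2 j' : ℚ) ≤ (r n) ^ 2 * ((l n : ℚ)⁻¹ * X1 + (X2 : ℚ)))) := by
  intro j'
  have hq : 1 < r n := hr1 n
  have hq0 : 0 < r n := lt_trans one_pos hq
  have hL : (0:ℚ) < (l n : ℚ) := by
    have : 0 < l n := lt_of_lt_of_le (by norm_num) (hl4 n)
    exact_mod_cast this
  set q := r n with hqdef
  set L : ℚ := (l n : ℚ) with hLdef
  set j0 : Fin (J (n+1)) := ⟨0, hJ (n+1)⟩ with hj0
  -- entry bounds
  have hA00 : ∀ j, q⁻¹ ^ 2 * (A n 0 0 j0 j : ℚ) ≤ (A n 0 0 j' j : ℚ) ∧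
      (A n 0 0 j' j : ℚ) ≤ q ^ 2 * (A n 0 0 j0 j : ℚ) := by
    intro j
    have h := (hcond5 n j' j' j).1
    have h0 := (hcond5 n j0 j' j).1
    exact ⟨div_sq_le q _ _ hq0 (le_trans h0.1 h.2),
           le_sq_mul q _ _ hq0 (le_trans h.1 h0.2)⟩
  have hA11 : ∀ j, q⁻¹ ^ 2 * (A n 1 1 j0 j : ℚ) ≤ (A n 1 1 j' j : ℚ) ∧
      (A n 1 1 j' j : ℚ) ≤ q ^ 2 * (A n 1 1 j0 j : ℚ) := by
    intro j
    have h := (hcond5 n j' j' j).2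
    have h0 := (hcond5 n j0 j' j).2
    exact ⟨div_sq_le q _ _ hq0 (le_trans h0.1 h.2),
           le_sq_mul q _ _ hq0 (le_trans h.1 h0.2)⟩
  have hA01 : ∀ j, q⁻¹ * L⁻¹ * (A n 1 1 j0 j : ℚ) ≤ (A n 0 1 j' j : ℚ) ∧
      (A n 0 1 j' j : ℚ) ≤ q * L⁻¹ * (A n 1 1 j0 j : ℚ) := by
    intro j
    have h0 := (hcond5 n j0 j' j).2
    exact ⟨le_qinvLinv L q _ _ hL h0.1, qLinv_le L q _ _ hL h0.2⟩
  have hA10 : ∀ j, q⁻¹ * L⁻¹ * (A n 0 0 j0 j : ℚ) ≤ (A n 1 0 j' j : ℚ) ∧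
      (A n 1 0 j' j : ℚ) ≤ q * L⁻¹ * (A n 0 0 j0 j : ℚ) := by
    intro j
    have h0 := (hcond5 n j0 j' j).1
    exact ⟨le_qinvLinv L q _ _ hL h0.1, qLinv_le L q _ _ hL h0.2⟩
  have hX1' : (X1 : ℚ) = ∑ j, (A n 0 0 j0 j : ℚ) * (x1 j : ℚ) := by
    rw [hX1]; push_cast; rfl
  have hX2' : (X2 : ℚ) = ∑ j, (A n 1 1 j0 j : ℚ) * (x2 j : ℚ) := by
    rw [hX2]; push_cast; rfl
  have hy1' : (y1 j' : ℚ) = ∑ j, ((A n 0 0 j' j : ℚ) * (x1 j : ℚ) + (A n 0 1 j' j : ℚ) * (x2 j : ℚ)) := by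
    rw [hy1]; push_cast; rfl
  have hy2' : (y2 j' : ℚ) = ∑ j, ((A n 1 0 j' j : ℚ) * (x1 j : ℚ) + (A n 1 1 j' j : ℚ) * (x2 j : ℚ)) := by
    rw [hy2]; push_cast; rfl
  have hterm1 : ∀ j,
      q⁻¹ ^ 2 * ((A n 0 0 j0 j : ℚ) * x1 j) + q⁻¹ ^ 2 * L⁻¹ * ((A n 1 1 j0 j : ℚ) * x2 j)
        ≤ (A n 0 0 j' j : ℚ) * x1 j + (A n 0 1 j' j : ℚ) * x2 j ∧
      (A n 0 0 j' j : ℚ) * x1 j + (A n 0 1 j' j : ℚ) * x2 j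
        ≤ q ^ 2 * ((A n 0 0 j0 j : ℚ) * x1 j) + q ^ 2 * L⁻¹ * ((A n 1 1 j0 j : ℚ) * x2 j) := by
    intro j
    have hx1 : (0:ℚ) ≤ x1 j := by exact_mod_cast (hxpos j).1
    have hx2 : (0:ℚ) ≤ x2 j := by exact_mod_cast (hxpos j).2
    have hb0 : (0:ℚ) ≤ (A n 1 1 j0 j : ℚ) := by exact_mod_cast (hA n 1 1 j0 j).le
    have ha0 : (0:ℚ) ≤ (A n 0 0 j0 j : ℚ) := by exact_mod_cast (hA n 0 0 j0 j).le
    exact term_bounds q L _ _ _ _ _ _ hq hL hx1 hx2 hb0 ha0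
      (hA00 j).1 (hA00 j).2 (hA01 j).1 (hA01 j).2
  have hterm2 : ∀ j,
      q⁻¹ ^ 2 * ((A n 1 1 j0 j : ℚ) * x2 j) + q⁻¹ ^ 2 * L⁻¹ * ((A n 0 0 j0 j : ℚ) * x1 j)
        ≤ (A n 1 1 j' j : ℚ) * x2 j + (A n 1 0 j' j : ℚ) * x1 j ∧
      (A n 1 1 j' j : ℚ) * x2 j + (A n 1 0 j' j : ℚ) * x1 j
        ≤ q ^ 2 * ((A n 1 1 j0 j : ℚ) * x2 j) + q ^ 2 * L⁻¹ * ((A n 0 0 j0 j : ℚ) * x1 j) := by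
    intro j
    have hx1 : (0:ℚ) ≤ x1 j := by exact_mod_cast (hxpos j).1
    have hx2 : (0:ℚ) ≤ x2 j := by exact_mod_cast (hxpos j).2
    have hb0 : (0:ℚ) ≤ (A n 0 0 j0 j : ℚ) := by exact_mod_cast (hA n 0 0 j0 j).le
    have ha0 : (0:ℚ) ≤ (A n 1 1 j0 j : ℚ) := by exact_mod_cast (hA n 1 1 j0 j).le
    exact term_bounds q L _ _ _ _ _ _ hq hL hx2 hx1 hb0 ha0
      (hA11 j).1 (hA11 j).2 (hA10 j).1 (hA10 j).2
  refine ⟨⟨?_, ?_⟩, ⟨?_, ?_⟩⟩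
  · calc q⁻¹ ^ 2 * ((X1 : ℚ) + L⁻¹ * X2)
        = ∑ j, (q⁻¹ ^ 2 * ((A n 0 0 j0 j : ℚ) * x1 j) + q⁻¹ ^ 2 * L⁻¹ * ((A n 1 1 j0 j : ℚ) * x2 j)) := by
          rw [hX1', hX2']; exact sum_comb _ _ _ _
      _ ≤ (y1 j' : ℚ) := by
          rw [hy1']
          exact Finset.sum_le_sum fun j _ => (hterm1 j).1
  · calc (y1 j' : ℚ)
        ≤ ∑ j, (q ^ 2 * ((A n 0 0 j0 j : ℚ) * x1 j) + q ^ 2 * L⁻¹ * ((A n 1 1 j0 j : ℚ) * x2 j)) := by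
          rw [hy1']
          exact Finset.sum_le_sum fun j _ => (hterm1 j).2
      _ = q ^ 2 * ((X1 : ℚ) + L⁻¹ * X2) := by
          rw [hX1', hX2']; exact (sum_comb _ _ _ _).symm
  · calc q⁻¹ ^ 2 * (L⁻¹ * X1 + (X2 : ℚ))
        = ∑ j, (q⁻¹ ^ 2 * ((A n 1 1 j0 j : ℚ) * x2 j) + q⁻¹ ^ 2 * L⁻¹ * ((A n 0 0 j0 j : ℚ) * x1 j)) := by
          rw [hX1', hX2']; exact sum_comb' _ _ _ _
      _ ≤ (y2 j' : ℚ) := by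
          rw [hy2']
          refine Finset.sum_le_sum fun j _ => le_trans (hterm2 j).1 (le_of_eq ?_)
          ring
  · calc (y2 j' : ℚ)
        ≤ ∑ j, (q ^ 2 * ((A n 1 1 j0 j : ℚ) * x2 j) + q ^ 2 * L⁻¹ * ((A n 0 0 j0 j : ℚ) * x1 j)) := by
          rw [hy2']
          refine Finset.sum_le_sum fun j _ => le_trans (le_of_eq ?_) (hterm2 j).2
          ring
      _ = q ^ 2 * (L⁻¹ * X1 + (X2 : ℚ)) := by
          rw [hX1', hX2']; exact (sum_comb' _ _ _ _).symm
end

section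
/- Under the hypotheses of Theorem 1.3, every state σ on (G, G⁺) (with respect to u = u¹ + u²) satisfies σ = σ(u¹)σ₁ + σ(u²)σ₂, where σ₁, σ₂ are the states with σ₁(u¹) = σ₂(u²) = 1, σ₁(u²) = σ₂(u¹) = 0. In particular σ₁ and σ₂ are the only extremal states of (G, G⁺). -/
/-!
Put `ψ = σ - σ(U1) σ₁ - σ(U2) σ₂`, a homomorphism `G → ℝ` vanishing on `U1` and `U2`. At level
`n`, `ψ` is given by its coefficients `(αₙ, βₙ)` on the standard basis of `ℤ^{Jₙ} ⊕ ℤ^{Jₙ}`, and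
these are obtained from the coefficients at level `n + 1` through the transposed block matrix.
By conditions (4) and (5), every block of `Aₙ` is nearly of rank one, so `(αₙ, βₙ)` is nearly
determined by two numbers `X` and `Y`; since `ψ` vanishes on `uₙ¹` and `uₙ²`, which are nearly
`K (1, -1/l)` and `K (-1/l, 1)`, both `X` and `Y` are small. Once `rₙ` is close to `1` this gives
`Kₙ ‖(αₙ, βₙ)‖₁ ≤ ½ K_{n+1} ‖(α_{n+1}, β_{n+1})‖₁`, while `Kₙ ‖(αₙ, βₙ)‖₁` stays bounded because
states have coefficients of total mass at most `2 / Kₙ`. Hence `ψ = 0`.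
Moreover `σ(Uᵢ) ≥ 0` for every state, because `uₙⁱ ≥ -rₙ Kₙ / lₙ` coordinatewise and `lₙ → ∞`;
so the states form the segment `[σ₁, σ₂]`, whose only extreme points are its endpoints.
-/

open scoped BigOperators

open Finset

def WithinFactor (c x y : ℝ) : Prop :=
  x ≤ c * y ∧ y ≤ c * x

namespace WithinFactor

variable {c d x y z : ℝ}

theorem symm (h : WithinFactor c x y) : WithinFactor c y x :=
  ⟨h.2, h.1⟩

theorem trans (hc : 0 ≤ c) (hd : 0 ≤ d) (h : WithinFactor c x y) (h' : WithinFactor d y z) :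
    WithinFactor (c * d) x z := by
  constructor
  · calc x ≤ c * y := h.1
      _ ≤ c * (d * z) := mul_le_mul_of_nonneg_left h'.1 hc
      _ = c * d * z := by ring
  · calc z ≤ d * y := h'.2
      _ ≤ d * (c * x) := mul_le_mul_of_nonneg_left h.2 hd
      _ = c * d * x := by ring

theorem nonneg (hc : 1 < c) (h : WithinFactor c x y) : 0 ≤ x := by
  have hx : x ≤ c * c * x := by
    nlinarith [h.1, mul_le_mul_of_nonneg_left h.2 (zero_le_one.trans hc.le)]
  by_contra! hneg
  nlinarith [mul_neg_of_pos_of_neg (by nlinarith : 0 < c * c - 1) hneg]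

theorem abs_sub_le (hc : 1 ≤ c) (h : WithinFactor c x y) :
    |x - y| ≤ (c - 1) * y := by
  rw [abs_le]
  constructor <;> nlinarith [h.1, h.2]

theorem of_inv_mul_le {r : ℝ} (hr : 0 < r) (hrc : r ≤ c) (hy : 0 ≤ y)
    (h : r⁻¹ * y ≤ x ∧ x ≤ r * y) : WithinFactor c y x := by
  have hyx : y ≤ r * x := (inv_mul_le_iff₀ hr).1 h.1
  have hx : 0 ≤ x := le_trans (by positivity) h.1
  exact ⟨hyx.trans (mul_le_mul_of_nonneg_right hrc hx),
    h.2.trans (mul_le_mul_of_nonneg_right hrc hy)⟩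

end WithinFactor

theorem abs_sum_mul_add_mul_sub_le {κ : Type*} [Fintype κ] {B C x y : κ → ℝ} {b c e : ℝ}
    (hB : ∀ j, |B j - b| ≤ e) (hC : ∀ j, |C j - c| ≤ e) :
    |∑ j, (B j * x j + C j * y j) - (b * ∑ j, x j + c * ∑ j, y j)|
      ≤ e * ∑ j, (|x j| + |y j|) := by
  have hsplit : ∑ j, (B j * x j + C j * y j) - (b * ∑ j, x j + c * ∑ j, y j)
      = ∑ j, ((B j - b) * x j + (C j - c) * y j) := by
    simp only [mul_sum, ← sum_add_distrib, ← sum_sub_distrib]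
    exact sum_congr rfl fun j _ => by ring
  rw [hsplit, mul_sum]
  refine (abs_sum_le_sum_abs _ _).trans (sum_le_sum fun j _ => ?_)
  calc |(B j - b) * x j + (C j - c) * y j|
      ≤ |B j - b| * |x j| + |C j - c| * |y j| := by
        simpa only [abs_mul] using abs_add_le ((B j - b) * x j) ((C j - c) * y j)
    _ ≤ e * |x j| + e * |y j| := by
        gcongr
        exacts [hB j, hC j]
    _ = e * (|x j| + |y j|) := by ring

theorem abs_sum_mul_add_le_of_sum_eq_zero {ι : Type*} [Fintype ι] {p q v w a d : ι → ℝ}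
    {X Y δ M : ℝ} (h : ∑ j, (p j * v j + q j * w j) = 0)
    (hv : ∀ j, |v j - a j * X| ≤ δ * a j) (hw : ∀ j, |w j - d j * Y| ≤ δ * d j)
    (hp : ∀ j, |p j| ≤ M) (hq : ∀ j, |q j| ≤ M) :
    |(∑ j, p j * a j) * X + (∑ j, q j * d j) * Y| ≤ M * δ * ∑ j, (a j + d j) := by
  have hsplit : (∑ j, p j * a j) * X + (∑ j, q j * d j) * Y
      = -∑ j, (p j * (v j - a j * X) + q j * (w j - d j * Y)) := by
    rw [← zero_sub, ← h, sum_mul, sum_mul, ← sum_add_distrib, ← sum_sub_distrib]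
    exact sum_congr rfl fun j _ => by ring
  rw [hsplit, abs_neg, mul_sum]
  refine (abs_sum_le_sum_abs _ _).trans (sum_le_sum fun j _ => ?_)
  have hM : 0 ≤ M := (abs_nonneg _).trans (hp j)
  calc |p j * (v j - a j * X) + q j * (w j - d j * Y)|
      ≤ |p j| * |v j - a j * X| + |q j| * |w j - d j * Y| := by
        simpa only [abs_mul] using abs_add_le (p j * (v j - a j * X)) (q j * (w j - d j * Y))
    _ ≤ M * (δ * a j) + M * (δ * d j) := by
        gcongr
        exacts [hp j, hv j, hq j, hw j]
    _ = M * δ * (a j + d j) := by ring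

section DualCoefficients

variable {ι : Type*} [Fintype ι] [DecidableEq ι]

def fstCoeff (φ : ((ι → ℤ) × (ι → ℤ)) →+ ℝ) (j : ι) : ℝ :=
  φ (Pi.single j 1, 0)

def sndCoeff (φ : ((ι → ℤ) × (ι → ℤ)) →+ ℝ) (j : ι) : ℝ :=
  φ (0, Pi.single j 1)

/-- The norm of `φ` as a functional for the sup norm on `(ι → ℤ) × (ι → ℤ)`. -/
def dualNorm (φ : ((ι → ℤ) × (ι → ℤ)) →+ ℝ) : ℝ :=
  ∑ j, (|fstCoeff φ j| + |sndCoeff φ j|)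

theorem apply_eq_sum_coeff (φ : ((ι → ℤ) × (ι → ℤ)) →+ ℝ) (x : (ι → ℤ) × (ι → ℤ)) :
    φ x = ∑ j, ((x.1 j : ℝ) * fstCoeff φ j + (x.2 j : ℝ) * sndCoeff φ j) := by
  have hx : x = ∑ j, (x.1 j • ((Pi.single j 1 : ι → ℤ), (0 : ι → ℤ)) +
      x.2 j • ((0 : ι → ℤ), (Pi.single j 1 : ι → ℤ))) := by
    ext i <;> simp [Prod.fst_sum, Prod.snd_sum, Finset.sum_apply, Pi.single_apply]
  conv_lhs => rw [hx]
  simp only [map_sum, map_add, map_zsmul]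
  simp only [zsmul_eq_mul, fstCoeff, sndCoeff]

theorem dualNorm_nonneg (φ : ((ι → ℤ) × (ι → ℤ)) →+ ℝ) : 0 ≤ dualNorm φ :=
  sum_nonneg fun _ _ => by positivity

theorem eq_zero_of_dualNorm_eq_zero {φ : ((ι → ℤ) × (ι → ℤ)) →+ ℝ} (h : dualNorm φ = 0) :
    φ = 0 := by
  have hcoeff := (sum_eq_zero_iff_of_nonneg fun j _ => by positivity).1 h
  ext x
  rw [apply_eq_sum_coeff, AddMonoidHom.zero_apply]
  refine sum_eq_zero fun j hj => ?_
  have h₁ := abs_nonneg (fstCoeff φ j)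
  have h₂ := abs_nonneg (sndCoeff φ j)
  have hj := hcoeff j hj
  rw [abs_eq_zero.1 (by linarith : |fstCoeff φ j| = 0),
    abs_eq_zero.1 (by linarith : |sndCoeff φ j| = 0), mul_zero, mul_zero, add_zero]

theorem dualNorm_sub_le (φ ψ : ((ι → ℤ) × (ι → ℤ)) →+ ℝ) :
    dualNorm (φ - ψ) ≤ dualNorm φ + dualNorm ψ := by
  rw [dualNorm, dualNorm, dualNorm, ← sum_add_distrib]
  refine sum_le_sum fun j _ => ?_
  simp only [fstCoeff, sndCoeff, AddMonoidHom.sub_apply]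
  linarith [abs_sub (φ (Pi.single j 1, 0)) (ψ (Pi.single j 1, 0)),
    abs_sub (φ (0, Pi.single j 1)) (ψ (0, Pi.single j 1))]

theorem dualNorm_smul (c : ℝ) (φ : ((ι → ℤ) × (ι → ℤ)) →+ ℝ) :
    dualNorm (c • φ) = |c| * dualNorm φ := by
  simp only [dualNorm, fstCoeff, sndCoeff, AddMonoidHom.smul_apply, smul_eq_mul, abs_mul,
    mul_sum, mul_add]

theorem abs_apply_le_mul_dualNorm (φ : ((ι → ℤ) × (ι → ℤ)) →+ ℝ) {x : (ι → ℤ) × (ι → ℤ)}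
    {M : ℝ} (hx : ∀ j, |(x.1 j : ℝ)| ≤ M ∧ |(x.2 j : ℝ)| ≤ M) : |φ x| ≤ M * dualNorm φ := by
  rw [apply_eq_sum_coeff, dualNorm, mul_sum]
  refine (abs_sum_le_sum_abs _ _).trans (sum_le_sum fun j _ => ?_)
  calc |(x.1 j : ℝ) * fstCoeff φ j + (x.2 j : ℝ) * sndCoeff φ j|
      ≤ |(x.1 j : ℝ)| * |fstCoeff φ j| + |(x.2 j : ℝ)| * |sndCoeff φ j| := by
        simpa only [abs_mul] using
          abs_add_le ((x.1 j : ℝ) * fstCoeff φ j) ((x.2 j : ℝ) * sndCoeff φ j)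
    _ ≤ M * |fstCoeff φ j| + M * |sndCoeff φ j| := by
        gcongr
        exacts [(hx j).1, (hx j).2]
    _ = M * (|fstCoeff φ j| + |sndCoeff φ j|) := by ring

theorem mul_dualNorm_le_apply {φ : ((ι → ℤ) × (ι → ℤ)) →+ ℝ} (hφ : ∀ x, 0 ≤ x → 0 ≤ φ x)
    {x : (ι → ℤ) × (ι → ℤ)} {m : ℝ} (hx : ∀ j, m ≤ x.1 j ∧ m ≤ x.2 j) :
    m * dualNorm φ ≤ φ x := by
  have hfst : ∀ j, 0 ≤ fstCoeff φ j := fun j =>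
    hφ _ ⟨Pi.single_nonneg.2 zero_le_one, le_rfl⟩
  have hsnd : ∀ j, 0 ≤ sndCoeff φ j := fun j =>
    hφ _ ⟨le_rfl, Pi.single_nonneg.2 zero_le_one⟩
  rw [apply_eq_sum_coeff, dualNorm, mul_sum]
  refine sum_le_sum fun j _ => ?_
  rw [abs_of_nonneg (hfst j), abs_of_nonneg (hsnd j), mul_add]
  exact add_le_add (mul_le_mul_of_nonneg_right (hx j).1 (hfst j))
    (mul_le_mul_of_nonneg_right (hx j).2 (hsnd j))

end DualCoefficients

/-- All estimates are made with this fixed ratio: since `r n → 1`, conditions (4) and (5) of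
Theorem 1.3 hold with ratio `ρ` from some level on. -/
local notation "ρ" => (101 / 100 : ℝ)

section LevelBounds

variable {ι κ : Type*}

/-- Condition (4) of Theorem 1.3 at one level: up to the factor `ρ`, the diagonal blocks of the
order unit are `K` and the off-diagonal ones are `-K / l`. -/
structure UnitBounds (l K : ℝ) (u : Fin 2 → Fin 2 → ι → ℝ) : Prop where
  diag : ∀ i j, WithinFactor ρ K (u i i j)
  fst_snd : ∀ j, WithinFactor ρ K (l * -u 0 1 j)
  snd_fst : ∀ j, WithinFactor ρ K (l * -u 1 0 j)

/-- Condition (5) of Theorem 1.3 at one level: in every column, each entry of a diagonal block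
agrees up to the factor `ρ` with `l` times each entry of the block below or above it. -/
structure MatrixBounds (l : ℝ) (A : Fin 2 → Fin 2 → κ → ι → ℝ) : Prop where
  fst : ∀ j' j'' j, WithinFactor ρ (A 0 0 j' j) (l * A 1 0 j'' j)
  snd : ∀ j' j'' j, WithinFactor ρ (A 1 1 j' j) (l * A 0 1 j'' j)

theorem unitBounds_of_rat {u : Fin 2 → Fin 2 → ι → ℤ} {r : ℚ} {K l : ℕ} (hr : 1 < r)
    (hrρ : (r : ℝ) ≤ ρ)
    (h : ∀ j,
      (r⁻¹ * K ≤ (u 0 0 j : ℚ) ∧ (u 0 0 j : ℚ) ≤ r * K) ∧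
      (r⁻¹ * K ≤ (u 1 1 j : ℚ) ∧ (u 1 1 j : ℚ) ≤ r * K) ∧
      (-(r * K) ≤ (l : ℚ) * u 0 1 j ∧ (l : ℚ) * u 0 1 j ≤ -(r⁻¹ * K)) ∧
      (-(r * K) ≤ (l : ℚ) * u 1 0 j ∧ (l : ℚ) * u 1 0 j ≤ -(r⁻¹ * K))) :
    UnitBounds l K (fun i p j => (u i p j : ℝ)) := by
  have hr₀ : (0 : ℝ) < r := by exact_mod_cast zero_lt_one.trans hr
  have key : ∀ {x : ℚ}, r⁻¹ * K ≤ x ∧ x ≤ r * K → WithinFactor ρ K (x : ℝ) := fun hx =>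
    WithinFactor.of_inv_mul_le hr₀ hrρ (Nat.cast_nonneg K) (by exact_mod_cast hx)
  refine ⟨fun i j => ?_, fun j => ?_, fun j => ?_⟩
  · fin_cases i
    exacts [by simpa using key (h j).1, by simpa using key (h j).2.1]
  · simpa using key (x := -(l * u 0 1 j))
      ⟨by linarith [(h j).2.2.1.2], by linarith [(h j).2.2.1.1]⟩
  · simpa using key (x := -(l * u 1 0 j))
      ⟨by linarith [(h j).2.2.2.2], by linarith [(h j).2.2.2.1]⟩

theorem matrixBounds_of_rat {A : Fin 2 → Fin 2 → κ → ι → ℤ} {r : ℚ} {l : ℕ} (hr : 1 < r)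
    (hrρ : (r : ℝ) ≤ ρ) (hA : ∀ p q j' j, 0 < A p q j' j)
    (h : ∀ j' j'' j,
      (r⁻¹ * A 0 0 j' j ≤ (l : ℚ) * A 1 0 j'' j ∧ (l : ℚ) * A 1 0 j'' j ≤ r * A 0 0 j' j) ∧
      (r⁻¹ * A 1 1 j' j ≤ (l : ℚ) * A 0 1 j'' j ∧ (l : ℚ) * A 0 1 j'' j ≤ r * A 1 1 j' j)) :
    MatrixBounds l (fun p q j' j => (A p q j' j : ℝ)) := by
  have hr₀ : (0 : ℝ) < r := by exact_mod_cast zero_lt_one.trans hr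
  refine ⟨fun j' j'' j => ?_, fun j' j'' j => ?_⟩
  · exact WithinFactor.of_inv_mul_le hr₀ hrρ (by exact_mod_cast (hA 0 0 j' j).le)
      (by exact_mod_cast (h j' j'' j).1)
  · exact WithinFactor.of_inv_mul_le hr₀ hrρ (by exact_mod_cast (hA 1 1 j' j).le)
      (by exact_mod_cast (h j' j'' j).2)

namespace UnitBounds

variable {l K : ℝ} {u : Fin 2 → Fin 2 → ι → ℝ}

theorem nonneg (hu : UnitBounds l K u) (i : Fin 2) (j : ι) : 0 ≤ u i i j :=
  (hu.diag i j).symm.nonneg (by norm_num)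

theorem off_diag (hu : UnitBounds l K u) (hl : 0 < l) {i p : Fin 2} (hip : i ≠ p) (j : ι) :
    0 ≤ -u i p j ∧ l * -u i p j ≤ ρ * K := by
  have h : WithinFactor ρ K (l * -u i p j) := by
    fin_cases i <;> fin_cases p
    exacts [absurd rfl hip, hu.fst_snd j, hu.snd_fst j, absurd rfl hip]
  exact ⟨nonneg_of_mul_nonneg_right (h.symm.nonneg (by norm_num)) hl, h.2⟩

theorem abs_le (hu : UnitBounds l K u) (hl : 1 ≤ l) (i p : Fin 2) (j : ι) :
    |u i p j| ≤ ρ * K := by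
  by_cases hip : i = p
  · subst hip
    rw [abs_of_nonneg (hu.nonneg i j)]
    exact (hu.diag i j).2
  · obtain ⟨h₀, h₁⟩ := hu.off_diag (by linarith) hip j
    rw [abs_of_nonpos (by linarith)]
    nlinarith

theorem neg_div_le (hu : UnitBounds l K u) (hl : 0 < l) (i p : Fin 2) (j : ι) :
    -(ρ * K / l) ≤ u i p j := by
  have hK : 0 ≤ K := (hu.diag 0 j).nonneg (by norm_num)
  by_cases hip : i = p
  · subst hip
    linarith [hu.nonneg i j, div_nonneg (mul_nonneg (by norm_num : (0 : ℝ) ≤ ρ) hK) hl.le]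
  · rw [neg_le, le_div_iff₀ hl]
    linarith [(hu.off_diag hl hip j).2]

theorem half_le_add (hu : UnitBounds l K u) (hl : 4 ≤ l) (j : ι) :
    K / 2 ≤ u 0 0 j + u 1 0 j ∧ K / 2 ≤ u 0 1 j + u 1 1 j := by
  have h₁ := hu.off_diag (by linarith) (by decide : (1 : Fin 2) ≠ 0) j
  have h₂ := hu.off_diag (by linarith) (by decide : (0 : Fin 2) ≠ 1) j
  have hK : 0 ≤ K := (hu.diag 0 j).nonneg (by norm_num)
  constructor
  · nlinarith [(hu.diag 0 j).1]
  · nlinarith [(hu.diag 1 j).1]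

end UnitBounds

end LevelBounds

section Contraction

variable {ι κ : Type*} {l K K' : ℝ}

namespace MatrixBounds

variable [Fintype κ] {A : Fin 2 → Fin 2 → κ → ι → ℝ}

theorem abs_fst_sub_le (hA : MatrixBounds l A) (hl : 1 ≤ l) (j₀ : κ) (α β : κ → ℝ) (j : ι) :
    |l * ∑ j', (A 0 0 j' j * α j' + A 1 0 j' j * β j')
        - A 0 0 j₀ j * (l * ∑ j', α j' + ∑ j', β j')|
      ≤ (ρ ^ 2 - 1) * l * (∑ j', (|α j'| + |β j'|)) * A 0 0 j₀ j := by
  have ha : 0 ≤ A 0 0 j₀ j := (hA.fst j₀ j₀ j).nonneg (by norm_num)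
  have hB : ∀ j', |l * A 0 0 j' j - l * A 0 0 j₀ j| ≤ (ρ ^ 2 - 1) * l * A 0 0 j₀ j := by
    intro j'
    have h := ((hA.fst j' j₀ j).trans (by norm_num) (by norm_num)
      (hA.fst j₀ j₀ j).symm).abs_sub_le (by norm_num)
    rw [← mul_sub, abs_mul, abs_of_nonneg (by linarith)]
    nlinarith
  have hC : ∀ j', |l * A 1 0 j' j - A 0 0 j₀ j| ≤ (ρ ^ 2 - 1) * l * A 0 0 j₀ j := by
    intro j'
    have h := (hA.fst j₀ j' j).symm.abs_sub_le (by norm_num)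
    nlinarith
  have hsum : l * ∑ j', (A 0 0 j' j * α j' + A 1 0 j' j * β j')
      = ∑ j', ((l * A 0 0 j' j) * α j' + (l * A 1 0 j' j) * β j') := by
    rw [mul_sum]
    exact sum_congr rfl fun _ _ => by ring
  rw [hsum, show A 0 0 j₀ j * (l * ∑ j', α j' + ∑ j', β j')
    = l * A 0 0 j₀ j * ∑ j', α j' + A 0 0 j₀ j * ∑ j', β j' by ring]
  exact (abs_sum_mul_add_mul_sub_le hB hC).trans_eq (by ring)

theorem abs_snd_sub_le (hA : MatrixBounds l A) (hl : 1 ≤ l) (j₀ : κ) (α β : κ → ℝ) (j : ι) :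
    |l * ∑ j', (A 0 1 j' j * α j' + A 1 1 j' j * β j')
        - A 1 1 j₀ j * (∑ j', α j' + l * ∑ j', β j')|
      ≤ (ρ ^ 2 - 1) * l * (∑ j', (|α j'| + |β j'|)) * A 1 1 j₀ j := by
  have hd : 0 ≤ A 1 1 j₀ j := (hA.snd j₀ j₀ j).nonneg (by norm_num)
  have hB : ∀ j', |l * A 0 1 j' j - A 1 1 j₀ j| ≤ (ρ ^ 2 - 1) * l * A 1 1 j₀ j := by
    intro j'
    have h := (hA.snd j₀ j' j).symm.abs_sub_le (by norm_num)
    nlinarith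
  have hC : ∀ j', |l * A 1 1 j' j - l * A 1 1 j₀ j| ≤ (ρ ^ 2 - 1) * l * A 1 1 j₀ j := by
    intro j'
    have h := ((hA.snd j' j₀ j).trans (by norm_num) (by norm_num)
      (hA.snd j₀ j₀ j).symm).abs_sub_le (by norm_num)
    rw [← mul_sub, abs_mul, abs_of_nonneg (by linarith)]
    nlinarith
  have hsum : l * ∑ j', (A 0 1 j' j * α j' + A 1 1 j' j * β j')
      = ∑ j', ((l * A 0 1 j' j) * α j' + (l * A 1 1 j' j) * β j') := by
    rw [mul_sum]
    exact sum_congr rfl fun _ _ => by ring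
  rw [hsum, show A 1 1 j₀ j * (∑ j', α j' + l * ∑ j', β j')
    = A 1 1 j₀ j * ∑ j', α j' + l * A 1 1 j₀ j * ∑ j', β j' by ring]
  exact (abs_sum_mul_add_mul_sub_le hB hC).trans_eq (by ring)

end MatrixBounds

theorem add_le_of_abs_add_le {P Q P' Q' X Y s t E : ℝ} (hl : 4 ≤ l) (hs : 0 ≤ s) (ht : 0 ≤ t)
    (hP : s ≤ ρ * P) (hQ : l * |Q| ≤ ρ * t) (hP' : t ≤ ρ * P') (hQ' : l * |Q'| ≤ ρ * s)
    (h : |P * X + Q * Y| ≤ E) (h' : |Q' * X + P' * Y| ≤ E) : s * |X| + t * |Y| ≤ 3 * E := by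
  have hE : 0 ≤ E := (abs_nonneg _).trans h
  have hX : P * |X| ≤ E + |Q| * |Y| := by
    have := abs_sub (P * X + Q * Y) (Q * Y)
    rw [add_sub_cancel_right, abs_mul, abs_mul, abs_of_nonneg (by linarith : 0 ≤ P)] at this
    linarith
  have hY : P' * |Y| ≤ E + |Q'| * |X| := by
    have := abs_sub (Q' * X + P' * Y) (Q' * X)
    rw [add_sub_cancel_left, abs_mul, abs_mul, abs_of_nonneg (by linarith : 0 ≤ P')] at this
    linarith
  have hsX : l * (s * |X|) ≤ ρ * l * E + ρ ^ 2 * (t * |Y|) := by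
    nlinarith [mul_le_mul_of_nonneg_right hP (abs_nonneg X),
      mul_le_mul_of_nonneg_right hQ (abs_nonneg Y), abs_nonneg Q]
  have htY : l * (t * |Y|) ≤ ρ * l * E + ρ ^ 2 * (s * |X|) := by
    nlinarith [mul_le_mul_of_nonneg_right hP' (abs_nonneg Y),
      mul_le_mul_of_nonneg_right hQ' (abs_nonneg X), abs_nonneg Q']
  nlinarith [mul_nonneg hE (by linarith : (0 : ℝ) ≤ l - 4), abs_nonneg X, abs_nonneg Y,
    mul_nonneg hs (abs_nonneg X), mul_nonneg ht (abs_nonneg Y)]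

namespace UnitBounds

variable [Fintype ι] {u : Fin 2 → Fin 2 → ι → ℝ} {w : ι → ℝ}

theorem mul_sum_le (hu : UnitBounds l K u) (i : Fin 2) (hw : ∀ j, 0 ≤ w j) :
    K * ∑ j, w j ≤ ρ * ∑ j, u i i j * w j := by
  rw [mul_sum, mul_sum]
  exact sum_le_sum fun j _ => by nlinarith [mul_le_mul_of_nonneg_right (hu.diag i j).1 (hw j)]

theorem mul_abs_sum_le (hu : UnitBounds l K u) (hl : 0 < l) {i p : Fin 2} (hip : i ≠ p)
    (hw : ∀ j, 0 ≤ w j) : l * |∑ j, u i p j * w j| ≤ ρ * (K * ∑ j, w j) := by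
  have hsum : |∑ j, u i p j * w j| = ∑ j, -u i p j * w j := by
    have hnonpos : ∑ j, u i p j * w j ≤ 0 := sum_nonpos fun j _ => by
      nlinarith [(hu.off_diag hl hip j).1, hw j]
    rw [abs_of_nonpos hnonpos, ← sum_neg_distrib]
    exact sum_congr rfl fun j _ => by ring
  rw [hsum, mul_sum, mul_sum, mul_sum]
  exact sum_le_sum fun j _ => by
    nlinarith [mul_le_mul_of_nonneg_right (hu.off_diag hl hip j).2 (hw j)]

end UnitBounds

variable [Fintype ι]

theorem mul_sum_diag_le_of_bounds {u : Fin 2 → Fin 2 → ι → ℝ} {A : Fin 2 → Fin 2 → κ → ι → ℝ}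
    (hu : UnitBounds l K u) (hA : MatrixBounds l A) (hl : 4 ≤ l) (j₀ : κ)
    (hK' : ∀ i, ∑ j, (A i 0 j₀ j * u i 0 j + A i 1 j₀ j * u i 1 j) ≤ ρ * K') :
    K * ∑ j, (A 0 0 j₀ j + A 1 1 j₀ j) ≤ 3 * K' := by
  have hK : ∀ j : ι, 0 ≤ K := fun j => (hu.diag 0 j).nonneg (by norm_num)
  have hl₀ : 0 < l := by linarith
  have hl16 : 16 ≤ l ^ 2 := by nlinarith
  -- the off-diagonal terms are smaller by the factor `l ^ 2`
  have row₀ : ∀ j, K * A 0 0 j₀ j - ρ ^ 3 / 16 * (K * A 1 1 j₀ j)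
      ≤ ρ * (A 0 0 j₀ j * u 0 0 j + A 0 1 j₀ j * u 0 1 j) := by
    intro j
    have ha := (hA.fst j₀ j₀ j).nonneg (by norm_num)
    obtain ⟨hv₀, hv⟩ := hu.off_diag hl₀ (by decide : (0 : Fin 2) ≠ 1) j
    have hprod := mul_le_mul (hA.snd j₀ j₀ j).2 hv (mul_nonneg (by linarith) hv₀)
      (mul_nonneg (by norm_num) ((hA.snd j₀ j₀ j).nonneg (by norm_num)))
    have hpos : 0 ≤ A 0 1 j₀ j * -u 0 1 j := mul_nonneg
      (nonneg_of_mul_nonneg_right ((hA.snd j₀ j₀ j).symm.nonneg (by norm_num)) hl₀) hv₀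
    nlinarith [hK j, mul_le_mul_of_nonneg_left (hu.diag 0 j).1 ha,
      mul_le_mul_of_nonneg_right hl16 hpos]
  have row₁ : ∀ j, K * A 1 1 j₀ j - ρ ^ 3 / 16 * (K * A 0 0 j₀ j)
      ≤ ρ * (A 1 0 j₀ j * u 1 0 j + A 1 1 j₀ j * u 1 1 j) := by
    intro j
    have hd := (hA.snd j₀ j₀ j).nonneg (by norm_num)
    obtain ⟨hv₀, hv⟩ := hu.off_diag hl₀ (by decide : (1 : Fin 2) ≠ 0) j
    have hprod := mul_le_mul (hA.fst j₀ j₀ j).2 hv (mul_nonneg (by linarith) hv₀)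
      (mul_nonneg (by norm_num) ((hA.fst j₀ j₀ j).nonneg (by norm_num)))
    have hpos : 0 ≤ A 1 0 j₀ j * -u 1 0 j := mul_nonneg
      (nonneg_of_mul_nonneg_right ((hA.fst j₀ j₀ j).symm.nonneg (by norm_num)) hl₀) hv₀
    nlinarith [hK j, mul_le_mul_of_nonneg_left (hu.diag 1 j).1 hd,
      mul_le_mul_of_nonneg_right hl16 hpos]
  have s₀ := sum_le_sum fun j (_ : j ∈ univ) => row₀ j
  have s₁ := sum_le_sum fun j (_ : j ∈ univ) => row₁ j
  simp only [sum_sub_distrib, ← mul_sum] at s₀ s₁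
  have ha : 0 ≤ K * ∑ j, A 0 0 j₀ j := by
    rw [mul_sum]
    exact sum_nonneg fun j _ => mul_nonneg (hK j) ((hA.fst j₀ j₀ j).nonneg (by norm_num))
  have hd : 0 ≤ K * ∑ j, A 1 1 j₀ j := by
    rw [mul_sum]
    exact sum_nonneg fun j _ => mul_nonneg (hK j) ((hA.snd j₀ j₀ j).nonneg (by norm_num))
  rw [sum_add_distrib, mul_add]
  linarith [hK' 0, hK' 1]

variable [Fintype κ]

theorem sum_abs_le_half_of_bounds {u : Fin 2 → Fin 2 → ι → ℝ} {A : Fin 2 → Fin 2 → κ → ι → ℝ}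
    (hu : UnitBounds l K u) (hA : MatrixBounds l A) (hl : 4 ≤ l)
    (hK' : ∀ i j', ∑ j, (A i 0 j' j * u i 0 j + A i 1 j' j * u i 1 j) ≤ ρ * K')
    {α β : κ → ℝ} {α' β' : ι → ℝ}
    (hα' : ∀ j, α' j = ∑ j', (A 0 0 j' j * α j' + A 1 0 j' j * β j'))
    (hβ' : ∀ j, β' j = ∑ j', (A 0 1 j' j * α j' + A 1 1 j' j * β j'))
    (h₀ : ∑ j, (u 0 0 j * α' j + u 0 1 j * β' j) = 0)
    (h₁ : ∑ j, (u 1 0 j * α' j + u 1 1 j * β' j) = 0) :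
    K * ∑ j, (|α' j| + |β' j|) ≤ 1 / 2 * (K' * ∑ j', (|α j'| + |β j'|)) := by
  rcases isEmpty_or_nonempty κ with hκ | ⟨⟨j₀⟩⟩
  · simp [hα', hβ']
  rcases isEmpty_or_nonempty ι with hι | ⟨⟨j₁⟩⟩
  · have : 0 ≤ K' := by simpa using hK' 0 j₀
    simp only [univ_eq_empty, sum_empty, mul_zero]
    positivity
  have hK : 0 ≤ K := (hu.diag 0 j₁).nonneg (by norm_num)
  have hl₀ : 0 < l := by linarith
  set a : ι → ℝ := fun j => A 0 0 j₀ j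
  set d : ι → ℝ := fun j => A 1 1 j₀ j
  have ha : ∀ j, 0 ≤ a j := fun j => (hA.fst j₀ j₀ j).nonneg (by norm_num)
  have hd : ∀ j, 0 ≤ d j := fun j => (hA.snd j₀ j₀ j).nonneg (by norm_num)
  set m := ∑ j', (|α j'| + |β j'|)
  set X := l * ∑ j', α j' + ∑ j', β j'
  set Y := ∑ j', α j' + l * ∑ j', β j'
  set δ := (ρ ^ 2 - 1) * l * m
  -- every block of `A` is nearly of rank one, so `l • α'` and `l • β'` are nearly `X • a`, `Y • d`
  have hα'X : ∀ j, |l * α' j - a j * X| ≤ δ * a j := fun j =>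
    hα' j ▸ hA.abs_fst_sub_le (by linarith) j₀ α β j
  have hβ'Y : ∀ j, |l * β' j - d j * Y| ≤ δ * d j := fun j =>
    hβ' j ▸ hA.abs_snd_sub_le (by linarith) j₀ α β j
  have hscale : ∀ {v w : ι → ℝ}, ∑ j, (v j * α' j + w j * β' j) = 0 →
      ∑ j, (v j * (l * α' j) + w j * (l * β' j)) = 0 := fun h => by
    rw [← mul_zero l, ← h, mul_sum]
    exact sum_congr rfl fun _ _ => by ring
  have hE₀ := abs_sum_mul_add_le_of_sum_eq_zero (hscale h₀) hα'X hβ'Y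
    (hu.abs_le (by linarith) 0 0) (hu.abs_le (by linarith) 0 1)
  have hE₁ := abs_sum_mul_add_le_of_sum_eq_zero (hscale h₁) hα'X hβ'Y
    (hu.abs_le (by linarith) 1 0) (hu.abs_le (by linarith) 1 1)
  have hXY := add_le_of_abs_add_le hl (mul_nonneg hK (sum_nonneg fun j _ => ha j))
    (mul_nonneg hK (sum_nonneg fun j _ => hd j))
    (hu.mul_sum_le 0 ha) (hu.mul_abs_sum_le hl₀ (by decide : (0 : Fin 2) ≠ 1) hd)
    (hu.mul_sum_le 1 hd) (hu.mul_abs_sum_le hl₀ (by decide : (1 : Fin 2) ≠ 0) ha) hE₀ hE₁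
  have hmass : K * ∑ j, (a j + d j) ≤ 3 * K' :=
    mul_sum_diag_le_of_bounds hu hA hl j₀ (fun i => hK' i j₀)
  have hlα' : l * ∑ j, (|α' j| + |β' j|)
      ≤ (∑ j, a j) * |X| + (∑ j, d j) * |Y| + δ * ∑ j, (a j + d j) := by
    simp only [mul_sum, sum_mul, ← sum_add_distrib]
    refine sum_le_sum fun j _ => ?_
    have h₁ := abs_sub_abs_le_abs_sub (l * α' j) (a j * X)
    have h₂ := abs_sub_abs_le_abs_sub (l * β' j) (d j * Y)
    rw [abs_mul, abs_mul, abs_of_pos hl₀, abs_of_nonneg (ha j)] at h₁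
    rw [abs_mul, abs_mul, abs_of_pos hl₀, abs_of_nonneg (hd j)] at h₂
    linarith [hα'X j, hβ'Y j]
  have hKad : 0 ≤ K * ∑ j, (a j + d j) :=
    mul_nonneg hK (sum_nonneg fun j _ => add_nonneg (ha j) (hd j))
  have hm : 0 ≤ m := sum_nonneg fun j _ => by positivity
  have hK' : 0 ≤ K' := by linarith
  have hKS : l * (K * ∑ j, (|α' j| + |β' j|)) ≤ (3 * ρ + 1) * δ * (K * ∑ j, (a j + d j)) :=
    calc l * (K * ∑ j, (|α' j| + |β' j|)) = K * (l * ∑ j, (|α' j| + |β' j|)) := by ring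
      _ ≤ K * ((∑ j, a j) * |X| + (∑ j, d j) * |Y| + δ * ∑ j, (a j + d j)) :=
        mul_le_mul_of_nonneg_left hlα' hK
      _ = (K * ∑ j, a j) * |X| + (K * ∑ j, d j) * |Y| + δ * (K * ∑ j, (a j + d j)) := by ring
      _ ≤ 3 * (ρ * K * δ * ∑ j, (a j + d j)) + δ * (K * ∑ j, (a j + d j)) := by linarith
      _ = (3 * ρ + 1) * δ * (K * ∑ j, (a j + d j)) := by ring
  refine le_of_mul_le_mul_left (hKS.trans ?_) hl₀
  calc (3 * ρ + 1) * δ * (K * ∑ j, (a j + d j)) ≤ (3 * ρ + 1) * δ * (3 * K') :=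
        mul_le_mul_of_nonneg_left hmass (by positivity)
    _ ≤ l * (1 / 2 * (K' * m)) := by
        rw [show δ = 201 / 10000 * l * m by norm_num [δ]]
        nlinarith [mul_nonneg (mul_nonneg hl₀.le hm) hK']

end Contraction

namespace UnitBounds

variable {ι : Type*} [Fintype ι] [DecidableEq ι] {l K : ℝ} {u : Fin 2 → Fin 2 → ι → ℤ}
  {φ : ((ι → ℤ) × (ι → ℤ)) →+ ℝ}

theorem mul_dualNorm_le_two (hu : UnitBounds l K fun i p j => (u i p j : ℝ)) (hl : 4 ≤ l)
    (hφ : ∀ x, 0 ≤ x → 0 ≤ φ x) (h : φ ((u 0 0, u 0 1) + (u 1 0, u 1 1)) = 1) :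
    K * dualNorm φ ≤ 2 := by
  have := mul_dualNorm_le_apply hφ (m := K / 2) (x := (u 0 0, u 0 1) + (u 1 0, u 1 1))
    fun j => by simpa using hu.half_le_add hl j
  linarith

theorem neg_div_le_apply (hu : UnitBounds l K fun i p j => (u i p j : ℝ)) (hl : 0 < l)
    (hφ : ∀ x, 0 ≤ x → 0 ≤ φ x) (hK : K * dualNorm φ ≤ 2) (i : Fin 2) :
    -(2 * ρ / l) ≤ φ (u i 0, u i 1) := by
  have := mul_dualNorm_le_apply hφ (m := -(ρ * K / l)) (x := (u i 0, u i 1))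
    fun j => ⟨hu.neg_div_le hl i 0 j, hu.neg_div_le hl i 1 j⟩
  have hρl : 0 ≤ ρ / l := by positivity
  calc -(2 * ρ / l) = -(ρ / l) * 2 := by ring
    _ ≤ -(ρ / l) * (K * dualNorm φ) := by nlinarith
    _ = -(ρ * K / l) * dualNorm φ := by ring
    _ ≤ φ (u i 0, u i 1) := this

end UnitBounds

theorem IsExtremalState.eq_or_eq_of_apply_eq {G : Type*} [AddCommGroup G] {P : Set G}
    {U1 U2 : G} {σ₁ σ₂ τ : G →+ ℝ} (hτ : IsExtremalState P (U1 + U2) τ)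
    (hσ₁ : IsState P (U1 + U2) σ₁) (hσ₂ : IsState P (U1 + U2) σ₂)
    (h : ∀ g, τ g = τ U1 * σ₁ g + τ U2 * σ₂ g) (h1 : 0 ≤ τ U1) (h2 : 0 ≤ τ U2) :
    τ = σ₁ ∨ τ = σ₂ := by
  have hsum : τ U1 + τ U2 = 1 := by rw [← map_add]; exact hτ.1.2
  rcases h1.eq_or_lt with h1 | h1
  · right
    ext g
    rw [h g, ← h1, show τ U2 = 1 by linarith]
    ring
  rcases h2.eq_or_lt with h2 | h2
  · left
    ext g
    rw [h g, ← h2, show τ U1 = 1 by linarith]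
    ring
  have hσ : σ₁ = σ₂ := hτ.2 σ₁ σ₂ hσ₁ hσ₂ (τ U1) h1 (by linarith) fun g => by
    rw [h g, show 1 - τ U1 = τ U2 by linarith]
  left
  ext g
  rw [h g, ← hσ, ← add_mul, hsum, one_mul]

theorem eq_zero_of_le_half_mul_succ {x : ℕ → ℝ} {N : ℕ} {C : ℝ} (h₀ : ∀ n ≥ N, 0 ≤ x n)
    (hC : ∀ n ≥ N, x n ≤ C) (hx : ∀ n ≥ N, x n ≤ 1 / 2 * x (n + 1)) : ∀ n ≥ N, x n = 0 := by
  have hpow : ∀ k, ∀ n ≥ N, x n ≤ (1 / 2) ^ k * C := by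
    intro k
    induction k with
    | zero => simpa using hC
    | succ k ih =>
      intro n hn
      calc x n ≤ 1 / 2 * x (n + 1) := hx n hn
        _ ≤ 1 / 2 * ((1 / 2) ^ k * C) := by gcongr; exact ih (n + 1) (by omega)
        _ = (1 / 2) ^ (k + 1) * C := by ring
  intro n hn
  have hlim : Filter.Tendsto (fun k => (1 / 2 : ℝ) ^ k * C) Filter.atTop (nhds 0) := by
    simpa using (tendsto_pow_atTop_nhds_zero_of_lt_one (r := (1 / 2 : ℝ)) (by norm_num)
      (by norm_num)).mul_const C
  exact le_antisymm (ge_of_tendsto' hlim fun k => hpow k n hn) (h₀ n hn)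

theorem nonneg_of_forall_neg_div_le {x C : ℝ} {l : ℕ → ℕ} (hl : StrictMono l) {N : ℕ}
    (h : ∀ n ≥ N, -(C / l n) ≤ x) : 0 ≤ x := by
  have hlim : Filter.Tendsto (fun n => -(C / l n)) Filter.atTop (nhds 0) := by
    simpa using ((tendsto_const_div_atTop_nhds_zero_nat C).comp hl.tendsto_atTop).neg
  exact le_of_tendsto hlim (Filter.eventually_atTop.2 ⟨N, h⟩)

section InductiveLimit

variable {J : ℕ → ℕ} {A : ∀ n, Fin 2 → Fin 2 → Fin (J (n+1)) → Fin (J n) → ℤ}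
  {G : Type*} [AddCommGroup G] {η : ∀ n, ((Fin (J n) → ℤ) × (Fin (J n) → ℤ)) →+ G}

theorem blockStep_single_zero (n : ℕ) (j : Fin (J n)) :
    blockStep J A n (Pi.single j 1, 0) = (fun j' => A n 0 0 j' j, fun j' => A n 1 0 j' j) := by
  ext j' <;> simp [blockStep, Pi.single_apply]

theorem blockStep_zero_single (n : ℕ) (j : Fin (J n)) :
    blockStep J A n (0, Pi.single j 1) = (fun j' => A n 0 1 j' j, fun j' => A n 1 1 j' j) := by
  ext j' <;> simp [blockStep, Pi.single_apply]

variable (hη : ∀ n x, η n x = η (n+1) (blockStep J A n x))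
include hη

theorem eq_blockPush (k n : ℕ) (x : (Fin (J n) → ℤ) × (Fin (J n) → ℤ)) :
    η n x = η (n + k) (blockPush J A k n x) := by
  induction k with
  | zero => rfl
  | succ k ih => rw [ih, hη]; rfl

theorem fstCoeff_comp_eq_sum (ψ : G →+ ℝ) (n : ℕ) (j : Fin (J n)) :
    fstCoeff (ψ.comp (η n)) j = ∑ j', ((A n 0 0 j' j : ℝ) * fstCoeff (ψ.comp (η (n + 1))) j'
      + (A n 1 0 j' j : ℝ) * sndCoeff (ψ.comp (η (n + 1))) j') := by
  rw [fstCoeff, AddMonoidHom.comp_apply, hη, blockStep_single_zero, ← AddMonoidHom.comp_apply,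
    apply_eq_sum_coeff]

theorem sndCoeff_comp_eq_sum (ψ : G →+ ℝ) (n : ℕ) (j : Fin (J n)) :
    sndCoeff (ψ.comp (η n)) j = ∑ j', ((A n 0 1 j' j : ℝ) * fstCoeff (ψ.comp (η (n + 1))) j'
      + (A n 1 1 j' j : ℝ) * sndCoeff (ψ.comp (η (n + 1))) j') := by
  rw [sndCoeff, AddMonoidHom.comp_apply, hη, blockStep_zero_single, ← AddMonoidHom.comp_apply,
    apply_eq_sum_coeff]

theorem eq_zero_of_dualNorm_comp_eq_zero (hsurj : ∀ g : G, ∃ n x, η n x = g) {ψ : G →+ ℝ}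
    {N : ℕ} (h : ∀ n ≥ N, dualNorm (ψ.comp (η n)) = 0) : ψ = 0 := by
  ext g
  obtain ⟨n, x, rfl⟩ := hsurj g
  rw [eq_blockPush hη N n x, ← AddMonoidHom.comp_apply,
    eq_zero_of_dualNorm_eq_zero (h (n + N) (by omega))]
  rfl

theorem dualNorm_comp_le_half {n : ℕ} {u : Fin 2 → Fin 2 → Fin (J n) → ℤ} {U1 U2 : G}
    (hU1 : η n (u 0 0, u 0 1) = U1) (hU2 : η n (u 1 0, u 1 1) = U2) {ψ : G →+ ℝ}
    (h1 : ψ U1 = 0) (h2 : ψ U2 = 0) {l K K' : ℝ} (hl : 4 ≤ l)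
    (hu : UnitBounds l K fun i p j => (u i p j : ℝ))
    (hA : MatrixBounds l fun p q j' j => (A n p q j' j : ℝ))
    (hK' : ∀ i j', ∑ j, ((A n i 0 j' j : ℝ) * u i 0 j + (A n i 1 j' j : ℝ) * u i 1 j) ≤ ρ * K') :
    K * dualNorm (ψ.comp (η n)) ≤ 1 / 2 * (K' * dualNorm (ψ.comp (η (n + 1)))) :=
  sum_abs_le_half_of_bounds hu hA hl hK' (fstCoeff_comp_eq_sum hη ψ n)
    (sndCoeff_comp_eq_sum hη ψ n)
    ((apply_eq_sum_coeff _ (u 0 0, u 0 1)).symm.trans (by rw [AddMonoidHom.comp_apply, hU1, h1]))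
    ((apply_eq_sum_coeff _ (u 1 0, u 1 1)).symm.trans (by rw [AddMonoidHom.comp_apply, hU2, h2]))

theorem apply_eq_of_contraction (hsurj : ∀ g : G, ∃ n x, η n x = g) {K : ℕ → ℝ}
    (hK : ∀ n, 0 < K n) {N : ℕ} {C : ℝ} {U1 U2 : G} {σ σ₁ σ₂ : G →+ ℝ}
    (hσ : ∀ n ≥ N, K n * dualNorm (σ.comp (η n)) ≤ C)
    (hσ₁ : ∀ n ≥ N, K n * dualNorm (σ₁.comp (η n)) ≤ C)
    (hσ₂ : ∀ n ≥ N, K n * dualNorm (σ₂.comp (η n)) ≤ C)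
    (h11 : σ₁ U1 = 1) (h22 : σ₂ U2 = 1) (h12 : σ₁ U2 = 0) (h21 : σ₂ U1 = 0)
    (hcontr : ∀ ψ : G →+ ℝ, ψ U1 = 0 → ψ U2 = 0 → ∀ n ≥ N,
      K n * dualNorm (ψ.comp (η n)) ≤ 1 / 2 * (K (n + 1) * dualNorm (ψ.comp (η (n + 1)))))
    (g : G) : σ g = σ U1 * σ₁ g + σ U2 * σ₂ g := by
  set ψ := σ - σ U1 • σ₁ - σ U2 • σ₂
  have hψ : ∀ g, ψ g = σ g - σ U1 * σ₁ g - σ U2 * σ₂ g := fun _ => rfl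
  have hbound : ∀ n ≥ N, K n * dualNorm (ψ.comp (η n)) ≤ C * (1 + |σ U1| + |σ U2|) := by
    intro n hn
    have h := (dualNorm_sub_le _ _).trans (add_le_add_left (dualNorm_sub_le
      (σ.comp (η n)) ((σ U1 • σ₁).comp (η n))) (dualNorm ((σ U2 • σ₂).comp (η n))))
    rw [← AddMonoidHom.sub_comp, ← AddMonoidHom.sub_comp, AddMonoidHom.smul_comp,
      AddMonoidHom.smul_comp, dualNorm_smul, dualNorm_smul] at h
    have h₁ := mul_le_mul_of_nonneg_left (hσ₁ n hn) (abs_nonneg (σ U1))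
    have h₂ := mul_le_mul_of_nonneg_left (hσ₂ n hn) (abs_nonneg (σ U2))
    nlinarith [mul_le_mul_of_nonneg_left h (hK n).le, hσ n hn]
  have hzero := eq_zero_of_le_half_mul_succ (fun n _ => mul_nonneg (hK n).le (dualNorm_nonneg _))
    hbound (hcontr ψ (by rw [hψ, h11, h21]; ring) (by rw [hψ, h22, h12]; ring))
  have hψ0 : ψ = 0 := eq_zero_of_dualNorm_comp_eq_zero hη hsurj fun n hn =>
    (mul_eq_zero.1 (hzero n hn)).resolve_left (hK n).ne'
  have hψg := DFunLike.congr_fun hψ0 g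
  rw [hψ, AddMonoidHom.zero_apply] at hψg
  linarith

end InductiveLimit

theorem stmt14_general
    (J : ℕ → ℕ)
    (u : ∀ n, Fin 2 → Fin 2 → Fin (J n) → ℤ)
    (A : ∀ n, Fin 2 → Fin 2 → Fin (J (n+1)) → Fin (J n) → ℤ)
    (hA : ∀ n (p q : Fin 2) j' j, 0 < A n p q j' j)
    (hcompat : ∀ n (i p : Fin 2) (j' : Fin (J (n+1))),
      u (n+1) i p j' = ∑ j, (A n p 0 j' j * u n i 0 j + A n p 1 j' j * u n i 1 j))
    (r : ℕ → ℚ) (hr1 : ∀ n, 1 < r n)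
    (hrlim : Filter.Tendsto r Filter.atTop (nhds 1))
    (K l : ℕ → ℕ) (hl : StrictMono l)
    (hK4 : ∀ n, 4 ≤ K n) (hl4 : ∀ n, 4 ≤ l n)
    (hcond4 : ∀ n (j : Fin (J n)),
      ((r n)⁻¹ * K n ≤ (u n 0 0 j : ℚ) ∧ (u n 0 0 j : ℚ) ≤ r n * K n) ∧
      ((r n)⁻¹ * K n ≤ (u n 1 1 j : ℚ) ∧ (u n 1 1 j : ℚ) ≤ r n * K n) ∧
      (-(r n * K n) ≤ (l n : ℚ) * u n 0 1 j ∧ (l n : ℚ) * u n 0 1 j ≤ -((r n)⁻¹ * K n)) ∧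
      (-(r n * K n) ≤ (l n : ℚ) * u n 1 0 j ∧ (l n : ℚ) * u n 1 0 j ≤ -((r n)⁻¹ * K n)))
    (hcond5 : ∀ n (j' j'' : Fin (J (n+1))) (j : Fin (J n)),
      ((r n)⁻¹ * A n 0 0 j' j ≤ (l n : ℚ) * A n 1 0 j'' j ∧
        (l n : ℚ) * A n 1 0 j'' j ≤ r n * A n 0 0 j' j) ∧
      ((r n)⁻¹ * A n 1 1 j' j ≤ (l n : ℚ) * A n 0 1 j'' j ∧
        (l n : ℚ) * A n 0 1 j'' j ≤ r n * A n 1 1 j' j))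
    {G : Type*} [AddCommGroup G]
    (η : ∀ n, ((Fin (J n) → ℤ) × (Fin (J n) → ℤ)) →+ G)
    (hηcompat : ∀ n x, η n x = η (n+1) (blockStep J A n x))
    (hsurj : ∀ g : G, ∃ n x, η n x = g)
    (P : Set G)
    (hP : P = {g : G | ∃ n x, (∀ j, 0 ≤ x.1 j ∧ 0 ≤ x.2 j) ∧ η n x = g})
    (U1 U2 : G)
    (hU1 : ∀ n, η n (u n 0 0, u n 0 1) = U1)
    (hU2 : ∀ n, η n (u n 1 0, u n 1 1) = U2)
    (σ₁ σ₂ : G →+ ℝ)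
    (hσ₁ : IsState P (U1 + U2) σ₁) (hσ₂ : IsState P (U1 + U2) σ₂)
    (h11 : σ₁ U1 = 1) (h22 : σ₂ U2 = 1) (h12 : σ₁ U2 = 0) (h21 : σ₂ U1 = 0) :
    (∀ σ : G →+ ℝ, IsState P (U1 + U2) σ →
      ∀ g : G, σ g = σ U1 * σ₁ g + σ U2 * σ₂ g) ∧
    ∀ τ : G →+ ℝ, IsExtremalState P (U1 + U2) τ → τ = σ₁ ∨ τ = σ₂ := by
  obtain ⟨N, hN⟩ := Filter.eventually_atTop.1
    (hrlim.eventually (eventually_le_nhds (by norm_num : (1 : ℚ) < 101 / 100)))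
  have hrρ : ∀ n ≥ N, (r n : ℝ) ≤ ρ := fun n hn => by
    simpa using (Rat.cast_le (K := ℝ)).2 (hN n hn)
  have hl' : ∀ n, (4 : ℝ) ≤ l n := fun n => by exact_mod_cast hl4 n
  have hUB : ∀ n ≥ N, UnitBounds (l n) (K n) fun i p j => (u n i p j : ℝ) := fun n hn =>
    unitBounds_of_rat (hr1 n) (hrρ n hn) (hcond4 n)
  have hpos : ∀ τ, IsState P (U1 + U2) τ → ∀ n x, 0 ≤ x → 0 ≤ τ.comp (η n) x :=
    fun τ hτ n x hx => hτ.1 _ (hP ▸ ⟨n, x, fun j => ⟨hx.1 j, hx.2 j⟩, rfl⟩)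
  have hmass : ∀ τ, IsState P (U1 + U2) τ → ∀ n ≥ N, K n * dualNorm (τ.comp (η n)) ≤ 2 :=
    fun τ hτ n hn => (hUB n hn).mul_dualNorm_le_two (hl' n) (hpos τ hτ n)
      (by rw [map_add, AddMonoidHom.comp_apply, AddMonoidHom.comp_apply, hU1, hU2, ← map_add, hτ.2])
  have hdecomp : ∀ σ : G →+ ℝ, IsState P (U1 + U2) σ → ∀ g, σ g = σ U1 * σ₁ g + σ U2 * σ₂ g :=
    fun σ hσ => apply_eq_of_contraction hηcompat hsurj (fun n => by have := hK4 n; positivity)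
      (hmass σ hσ) (hmass σ₁ hσ₁) (hmass σ₂ hσ₂) h11 h22 h12 h21
      fun ψ h1 h2 n hn => dualNorm_comp_le_half hηcompat (hU1 n) (hU2 n) h1 h2 (hl' n)
        (hUB n hn) (matrixBounds_of_rat (hr1 n) (hrρ n hn) (hA n) (hcond5 n)) fun i j' => by
          have := ((hUB (n + 1) (by omega)).diag i j').2
          rw [hcompat n i i j'] at this
          exact_mod_cast this
  have hlower : ∀ τ, IsState P (U1 + U2) τ → ∀ i, ∀ n ≥ N,
      -(2 * ρ / l n) ≤ τ (η n (u n i 0, u n i 1)) := fun τ hτ i n hn =>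
    (hUB n hn).neg_div_le_apply (by linarith [hl' n]) (hpos τ hτ n) (hmass τ hτ n hn) i
  refine ⟨hdecomp, fun τ hτ => hτ.eq_or_eq_of_apply_eq hσ₁ hσ₂ (hdecomp τ hτ.1) ?_ ?_⟩
  · exact nonneg_of_forall_neg_div_le hl fun n hn => hU1 n ▸ hlower τ hτ.1 0 n hn
  · exact nonneg_of_forall_neg_div_le hl fun n hn => hU2 n ▸ hlower τ hτ.1 1 n hn

/-- Lemma 2.3: every state is the corresponding convex combination of
`σ₁` and `σ₂`, and these are the only extremal states. -/
theorem stmt14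
    (J : ℕ → ℕ) (hJ : ∀ n, 0 < J n)
    (u : ∀ n, Fin 2 → Fin 2 → Fin (J n) → ℤ)
    (A : ∀ n, Fin 2 → Fin 2 → Fin (J (n+1)) → Fin (J n) → ℤ)
    (hA : ∀ n (p q : Fin 2) j' j, 0 < A n p q j' j)
    (hcompat : ∀ n (i p : Fin 2) (j' : Fin (J (n+1))),
      u (n+1) i p j' = ∑ j, (A n p 0 j' j * u n i 0 j + A n p 1 j' j * u n i 1 j))
    (r : ℕ → ℚ) (hr1 : ∀ n, 1 < r n) (hr2 : ∀ n, r n < 2)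
    (hrmono : ∀ n, r (n+1) ≤ r n)
    (hrlim : Filter.Tendsto r Filter.atTop (nhds 1))
    (K l : ℕ → ℕ) (hK : StrictMono K) (hl : StrictMono l)
    (hK4 : ∀ n, 4 ≤ K n) (hl4 : ∀ n, 4 ≤ l n)
    (hcond4 : ∀ n (j : Fin (J n)),
      ((r n)⁻¹ * K n ≤ (u n 0 0 j : ℚ) ∧ (u n 0 0 j : ℚ) ≤ r n * K n) ∧
      ((r n)⁻¹ * K n ≤ (u n 1 1 j : ℚ) ∧ (u n 1 1 j : ℚ) ≤ r n * K n) ∧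
      (-(r n * K n) ≤ (l n : ℚ) * u n 0 1 j ∧ (l n : ℚ) * u n 0 1 j ≤ -((r n)⁻¹ * K n)) ∧
      (-(r n * K n) ≤ (l n : ℚ) * u n 1 0 j ∧ (l n : ℚ) * u n 1 0 j ≤ -((r n)⁻¹ * K n)))
    (hcond5 : ∀ n (j' j'' : Fin (J (n+1))) (j : Fin (J n)),
      ((r n)⁻¹ * A n 0 0 j' j ≤ (l n : ℚ) * A n 1 0 j'' j ∧
        (l n : ℚ) * A n 1 0 j'' j ≤ r n * A n 0 0 j' j) ∧
      ((r n)⁻¹ * A n 1 1 j' j ≤ (l n : ℚ) * A n 0 1 j'' j ∧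
        (l n : ℚ) * A n 0 1 j'' j ≤ r n * A n 1 1 j' j))
    {G : Type*} [AddCommGroup G]
    (η : ∀ n, ((Fin (J n) → ℤ) × (Fin (J n) → ℤ)) →+ G)
    (hηcompat : ∀ n x, η n x = η (n+1) (blockStep J A n x))
    (hsurj : ∀ g : G, ∃ n x, η n x = g)
    (hker : ∀ n x, η n x = 0 → ∃ k, blockPush J A k n x = 0)
    (P : Set G)
    (hP : P = {g : G | ∃ n x, (∀ j, 0 ≤ x.1 j ∧ 0 ≤ x.2 j) ∧ η n x = g})
    (U1 U2 : G)
    (hU1 : ∀ n, η n (u n 0 0, u n 0 1) = U1)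
    (hU2 : ∀ n, η n (u n 1 0, u n 1 1) = U2)
    (σ₁ σ₂ : G →+ ℝ)
    (hσ₁ : IsState P (U1 + U2) σ₁) (hσ₂ : IsState P (U1 + U2) σ₂)
    (h11 : σ₁ U1 = 1) (h22 : σ₂ U2 = 1) (h12 : σ₁ U2 = 0) (h21 : σ₂ U1 = 0) :
    (∀ σ : G →+ ℝ, IsState P (U1 + U2) σ →
      ∀ g : G, σ g = σ U1 * σ₁ g + σ U2 * σ₂ g) ∧
    ∀ τ : G →+ ℝ, IsExtremalState P (U1 + U2) τ → τ = σ₁ ∨ τ = σ₂ :=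
  stmt14_general J u A hA hcompat r hr1 hrlim K l hl hK4 hl4 hcond4 hcond5 η hηcompat hsurj P hP U1
    U2 hU1 hU2 σ₁ σ₂ hσ₁ hσ₂ h11 h22 h12 h21
end

section
/- Let (G, G⁺) be a simple acyclic dimension group, η : (ℤ^J, ℤ^{J+}) → (G, G⁺) a positive group homomorphism, v an order unit of ℤ^{J+}, and s > 1 rational. Then there is K₀ ≥ 1 such that for every K ≥ K₀ there exist a 2J×J nonnegative integer matrix B and a positive group homomorphism η′ : (ℤ^{2J}, ℤ^{2J+}) → (G, G⁺) with η′ ∘ B = η and K ≤ (Bv)(j) ≤ sK for all 1 ≤ j ≤ 2J. -/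
/-- `G` is acyclic: it is not a cyclic group. -/
def IsAcyclic (G : Type*) [AddCommGroup G] : Prop :=
  ¬ ∃ g : G, ∀ x : G, ∃ n : ℤ, n • g = x

section PositiveCone
variable {G : Type*} [AddCommGroup G] {P : Set G}

def IsPosCone.toAddSubmonoid (hP : IsPosCone P) (h0 : (0 : G) ∈ P) : AddSubmonoid G where
  carrier := P
  add_mem' ha hb := hP.1 _ ha _ hb
  zero_mem' := h0

lemma IsPosCone.sum_mem (hP : IsPosCone P) (h0 : (0 : G) ∈ P) {ι : Type*} {F : Finset ι}
    {f : ι → G} (hf : ∀ i ∈ F, f i ∈ P) : ∑ i ∈ F, f i ∈ P :=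
  (hP.toAddSubmonoid h0).sum_mem hf

lemma IsPosCone.nsmul_mem (hP : IsPosCone P) (h0 : (0 : G) ∈ P) {a : G} (ha : a ∈ P) (n : ℕ) :
    n • a ∈ P :=
  (hP.toAddSubmonoid h0).nsmul_mem ha n

lemma IsPosCone.zsmul_mem (hP : IsPosCone P) (h0 : (0 : G) ∈ P) {a : G} (ha : a ∈ P) {n : ℤ}
    (hn : 0 ≤ n) : n • a ∈ P := by
  lift n to ℕ using hn
  simpa only [natCast_zsmul] using hP.nsmul_mem h0 ha n

lemma IsPosCone.sum_sub_mem (hP : IsPosCone P) (h0 : (0 : G) ∈ P) {ι : Type*}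
    [DecidableEq ι] {F : Finset ι} {f : ι → G} (hf : ∀ i ∈ F, f i ∈ P) {i : ι} (hi : i ∈ F) :
    ∑ l ∈ F, f l - f i ∈ P := by
  rw [← Finset.add_sum_erase F f hi, add_sub_cancel_left]
  exact hP.sum_mem h0 fun l hl => hf l (Finset.mem_of_mem_erase hl)

lemma IsPosCone.linearCombination_mem (hP : IsPosCone P) (h0 : (0 : G) ∈ P) {κ : Type*}
    [Fintype κ] {g : κ → G} (hg : ∀ i, g i ∈ P) {x : κ → ℤ} (hx : ∀ i, 0 ≤ x i) :
    Fintype.linearCombination ℤ g x ∈ P :=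
  hP.sum_mem h0 fun i _ => hP.zsmul_mem h0 (hg i) (hx i)

end PositiveCone

section Riesz
variable {G : Type*} [AddCommGroup G] {P : Set G}

/-- Riesz decomposition, with `x ≤ y` encoded as `y - x ∈ P`. -/
lemma RieszInterp.exists_decomp (hR : RieszInterp P) {x a b : G} (hx : x ∈ P) (ha : a ∈ P)
    (hb : b ∈ P) (h : a + b - x ∈ P) :
    ∃ y z, y ∈ P ∧ z ∈ P ∧ a - y ∈ P ∧ b - z ∈ P ∧ x = y + z := by
  obtain ⟨y, hy, hyz, hxy, hay⟩ := hR 0 (x - b) x a (by simpa using hx) (by simpa using hb)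
    (by simpa using ha) (by rwa [sub_sub_eq_add_sub])
  refine ⟨y, x - y, by simpa using hy, hxy, hay, ?_, by abel⟩
  convert hyz using 1
  abel

lemma RieszInterp.exists_decomp_sum (hP : IsPosCone P) (hR : RieszInterp P) (h0 : (0 : G) ∈ P)
    {ι : Type*} [DecidableEq ι] (F : Finset ι) {D : ι → G} (hD : ∀ l ∈ F, D l ∈ P) {x : G}
    (hx : x ∈ P) (hxD : ∑ l ∈ F, D l - x ∈ P) :
    ∃ t : ι → G, (∀ l ∈ F, t l ∈ P ∧ D l - t l ∈ P) ∧ x = ∑ l ∈ F, t l := by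
  induction F using Finset.induction_on generalizing x with
  | empty =>
    exact ⟨0, by simp, hP.2.2 x hx (by simpa using hxD)⟩
  | @insert i F hi ih =>
    rw [Finset.sum_insert hi] at hxD
    obtain ⟨y, z, hy, hz, hDy, hFz, rfl⟩ := hR.exists_decomp hx (hD i (Finset.mem_insert_self i F))
      (hP.sum_mem h0 fun l hl => hD l (Finset.mem_insert_of_mem hl)) hxD
    obtain ⟨t, ht, rfl⟩ := ih (fun l hl => hD l (Finset.mem_insert_of_mem hl)) hz hFz
    refine ⟨Function.update t i y, ?_, ?_⟩
    · intro l hl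
      rcases Finset.mem_insert.mp hl with rfl | hl
      · simpa using ⟨hy, hDy⟩
      · simpa [Function.update_of_ne (ne_of_mem_of_not_mem hl hi)] using ht l hl
    · rw [Finset.sum_insert hi, Function.update_self,
        Finset.sum_congr rfl fun l hl => Function.update_of_ne (ne_of_mem_of_not_mem hl hi) y t]

lemma RieszInterp.exists_common_refinement (hP : IsPosCone P) (hR : RieszInterp P)
    (h0 : (0 : G) ∈ P) {z : G} (hz : z ∈ P) :
    ∀ (N : ℕ) {r : G}, r ∈ P → N • z - r ∈ P →
      ∃ (κ : Type) (_ : Fintype κ) (g : κ → G) (n : κ → ℕ),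
        (∀ u, g u ∈ P) ∧ z = ∑ u, g u ∧ r = ∑ u, n u • g u
  | 0, r, hr, hNr => by
    refine ⟨Unit, inferInstance, fun _ => z, fun _ => 0, fun _ => hz, by simp, ?_⟩
    simpa using hP.2.2 r hr (by simpa using hNr)
  | N + 1, r, hr, hNr => by
    obtain ⟨y, r', hy, hr', hzy, hNr', rfl⟩ := hR.exists_decomp hr hz (hP.nsmul_mem h0 hz N)
      (by rwa [← succ_nsmul'])
    obtain ⟨κ, _, g, n, hg, hzg, rfl⟩ := exists_common_refinement hP hR h0 hz N hr' hNr'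
    classical
    obtain ⟨t, ht, rfl⟩ := hR.exists_decomp_sum hP h0 Finset.univ (fun u _ => hg u) hy
      (by rwa [← hzg])
    refine ⟨κ ⊕ κ, inferInstance, Sum.elim t (g - t), Sum.elim (n + 1) n, ?_, ?_, ?_⟩
    · rintro (u | u)
      exacts [(ht u (Finset.mem_univ u)).1, (ht u (Finset.mem_univ u)).2]
    · simp [Fintype.sum_sum_type, hzg]
    · simp only [Fintype.sum_sum_type, Sum.elim_inl, Sum.elim_inr, Pi.add_apply, Pi.one_apply,
        Pi.sub_apply, add_nsmul, one_nsmul, smul_sub, Finset.sum_add_distrib,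
        Finset.sum_sub_distrib]
      abel

end Riesz

section SimpleDimensionGroup
variable {G : Type*} [AddCommGroup G] {P : Set G}

lemma exists_eq_nsmul_of_atom (hP : IsPosCone P) (hR : RieszInterp P) (h0 : (0 : G) ∈ P)
    {w : G} (hw : w ∈ P) (hatom : ∀ x ∈ P, w - x ∈ P → x = 0 ∨ x = w) :
    ∀ (k : ℕ) {p : G}, p ∈ P → k • w - p ∈ P → ∃ n : ℕ, p = n • w
  | 0, p, hp, hkp => ⟨0, by simpa using hP.2.2 p hp (by simpa using hkp)⟩
  | k + 1, p, hp, hkp => by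
    obtain ⟨y, z, hy, hz, hwy, hkz, rfl⟩ := hR.exists_decomp hp hw (hP.nsmul_mem h0 hw k)
      (by rwa [← succ_nsmul'])
    obtain ⟨n, rfl⟩ := exists_eq_nsmul_of_atom hP hR h0 hw hatom k hz hkz
    rcases hatom y hy hwy with rfl | rfl
    · exact ⟨n, zero_add _⟩
    · exact ⟨n + 1, (succ_nsmul' y n).symm⟩

/-- Otherwise every positive element, hence every element, is a multiple of `w`. -/
lemma exists_nontrivial_split (hP : IsPosCone P) (hR : RieszInterp P) (h0 : (0 : G) ∈ P)
    (hac : IsAcyclic G) {w : G} (hw : w ∈ P) (hwu : IsOrderUnit P w) :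
    ∃ x ∈ P, x ≠ 0 ∧ w - x ∈ P ∧ w - x ≠ 0 := by
  by_contra! hsplit
  have hatom : ∀ x ∈ P, w - x ∈ P → x = 0 ∨ x = w := fun x hx hwx =>
    or_iff_not_imp_left.mpr fun hx0 => (sub_eq_zero.mp (hsplit x hx hx0 hwx)).symm
  have hmul : ∀ p ∈ P, ∃ n : ℕ, p = n • w := fun p hp =>
    let ⟨k, _, hkp⟩ := hwu.2 p
    exists_eq_nsmul_of_atom hP hR h0 hw hatom k hp hkp
  refine hac ⟨w, fun x => ?_⟩
  obtain ⟨a, ha, b, hb, rfl⟩ := hP.2.1 x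
  obtain ⟨m, rfl⟩ := hmul a ha
  obtain ⟨n, rfl⟩ := hmul b hb
  exact ⟨m - n, by rw [sub_zsmul, natCast_zsmul, natCast_zsmul, sub_eq_add_neg]⟩

lemma exists_common_lower_bound (hP : IsPosCone P) (hR : RieszInterp P) (h0 : (0 : G) ∈ P)
    {x y : G} (hx : x ∈ P) (hx0 : x ≠ 0) (hy : y ∈ P) (hyu : IsOrderUnit P y) :
    ∃ d ∈ P, d ≠ 0 ∧ x - d ∈ P ∧ y - d ∈ P := by
  classical
  obtain ⟨k, -, hkx⟩ := hyu.2 x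
  obtain ⟨t, ht, rfl⟩ := hR.exists_decomp_sum hP h0 (Finset.univ : Finset (Fin k))
    (fun _ _ => hy) hx (by simpa using hkx)
  obtain ⟨i, hi⟩ : ∃ i, t i ≠ 0 := by
    by_contra! h
    exact hx0 (Finset.sum_eq_zero fun i _ => h i)
  exact ⟨t i, (ht i (Finset.mem_univ i)).1, hi,
    hP.sum_sub_mem h0 (fun l hl => (ht l hl).1) (Finset.mem_univ i), (ht i (Finset.mem_univ i)).2⟩

lemma exists_two_nsmul_le (hG : IsSimpleDimensionGroup P) (h0 : (0 : G) ∈ P)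
    (hac : IsAcyclic G) {w : G} (hw : w ∈ P) (hw0 : w ≠ 0) :
    ∃ z ∈ P, z ≠ 0 ∧ w - 2 • z ∈ P := by
  have ⟨_, hP, _, hR, hsimp⟩ := hG
  obtain ⟨x, hx, hx0, hwx, hwx0⟩ := exists_nontrivial_split hP hR h0 hac hw (hsimp w hw hw0)
  obtain ⟨d, hd, hd0, hxd, hwxd⟩ :=
    exists_common_lower_bound hP hR h0 hx hx0 hwx (hsimp _ hwx hwx0)
  refine ⟨d, hd, hd0, ?_⟩
  convert hP.1 _ hxd _ hwxd using 1
  rw [two_nsmul]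
  abel

lemma exists_nsmul_le (hG : IsSimpleDimensionGroup P) (h0 : (0 : G) ∈ P)
    (hac : IsAcyclic G) {w : G} (hw : w ∈ P) (hw0 : w ≠ 0) (k : ℕ) :
    ∃ z ∈ P, z ≠ 0 ∧ w - k • z ∈ P := by
  have hP := hG.2.1
  have hpow : ∀ j : ℕ, ∃ z ∈ P, z ≠ 0 ∧ w - 2 ^ j • z ∈ P := by
    intro j
    induction j with
    | zero => exact ⟨w, hw, hw0, by simpa using h0⟩
    | succ j ih =>
      obtain ⟨z, hz, hz0, hwz⟩ := ih
      obtain ⟨y, hy, hy0, hzy⟩ := exists_two_nsmul_le hG h0 hac hz hz0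
      refine ⟨y, hy, hy0, ?_⟩
      convert hP.1 _ hwz _ (hP.nsmul_mem h0 hzy (2 ^ j)) using 1
      rw [smul_sub, smul_smul, pow_succ]
      abel
  obtain ⟨z, hz, hz0, hwz⟩ := hpow k
  refine ⟨z, hz, hz0, ?_⟩
  convert hP.1 _ hwz _ (hP.nsmul_mem h0 hz (2 ^ k - k)) using 1
  rw [sub_nsmul z (Nat.lt_two_pow_self).le]
  abel

lemma Nat.exists_mul_add_succ_mul_eq {c M : ℕ} (h : c * (c - 1) ≤ M) :
    ∃ α β : ℕ, c * α + (c + 1) * β = M := by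
  rcases Nat.eq_zero_or_pos c with rfl | hc
  · exact ⟨0, M, by simp⟩
  have hmod : M % c ≤ M / c := by
    have := Nat.mod_lt M hc
    have : c - 1 ≤ M / c := (Nat.le_div_iff_mul_le hc).2 (by rwa [mul_comm])
    omega
  refine ⟨M / c - M % c, M % c, ?_⟩
  zify [hmod]
  linear_combination Int.mul_ediv_add_emod (M : ℤ) c

lemma exists_eq_nsmul_add_succ_nsmul (hG : IsSimpleDimensionGroup P) (h0 : (0 : G) ∈ P)
    (hac : IsAcyclic G) {w : G} (hw : w ∈ P) (c : ℕ) :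
    ∃ a ∈ P, ∃ b ∈ P, w = c • a + (c + 1) • b := by
  have ⟨_, hP, _, hR, hsimp⟩ := hG
  rcases eq_or_ne w 0 with rfl | hw0
  · exact ⟨0, h0, 0, h0, by simp⟩
  obtain ⟨z, hz, hz0, hr⟩ := exists_nsmul_le hG h0 hac hw hw0 (c * (c - 1))
  obtain ⟨N, -, hNr⟩ := (hsimp z hz hz0).2 (w - (c * (c - 1)) • z)
  obtain ⟨κ, _, g, n, hg, rfl, hrg⟩ := hR.exists_common_refinement hP h0 hz N hr hNr
  -- every coefficient of `w` in the refinement is at least `c * (c - 1)`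
  choose α β hαβ using fun u => Nat.exists_mul_add_succ_mul_eq (Nat.le_add_right _ (n u))
  refine ⟨∑ u, α u • g u, hP.sum_mem h0 fun u _ => hP.nsmul_mem h0 (hg u) _,
    ∑ u, β u • g u, hP.sum_mem h0 fun u _ => hP.nsmul_mem h0 (hg u) _, ?_⟩
  rw [eq_add_of_sub_eq hrg, Finset.smul_sum, Finset.smul_sum, Finset.smul_sum,
    ← Finset.sum_add_distrib, ← Finset.sum_add_distrib]
  refine Finset.sum_congr rfl fun u _ => ?_
  rw [smul_smul, smul_smul, ← add_nsmul, ← add_nsmul, hαβ u, add_comm]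

end SimpleDimensionGroup

section Factorization
variable {G : Type*} [AddCommGroup G] {P : Set G} {ι κ : Type*} [DecidableEq ι]

lemma linearCombination_mulVec_eq [Fintype ι] [Fintype κ] (η : (ι → ℤ) →+ G) {B : κ → ι → ℤ}
    {g : κ → G} (hg : ∀ j, η (fun j' => if j = j' then 1 else 0) = ∑ i, B i j • g i)
    (x : ι → ℤ) : Fintype.linearCombination ℤ g (fun i => ∑ j, B i j * x j) = η x := by
  rw [Fintype.linearCombination_apply, ← η.coe_toIntLinearMap, LinearMap.pi_apply_eq_sum_univ]
  simp only [AddMonoidHom.coe_toIntLinearMap, hg, Finset.sum_smul, Finset.smul_sum, smul_smul]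
  rw [Finset.sum_comm]
  simp only [mul_comm]

def splitMatrix (c : ι → ℕ) : ι ⊕ ι → ι → ℤ :=
  Sum.elim (fun j => Pi.single j (c j : ℤ)) (fun j => Pi.single j ((c j + 1 : ℕ) : ℤ))

lemma splitMatrix_nonneg (c : ι → ℕ) (u : ι ⊕ ι) (j : ι) : 0 ≤ splitMatrix c u j := by
  rcases u with j' | j' <;> simp only [splitMatrix, Sum.elim_inl, Sum.elim_inr, Pi.single_apply] <;>
    split_ifs <;> positivity

lemma sum_splitMatrix_smul [Fintype ι] (c : ι → ℕ) (a b : ι → G) (j : ι) :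
    ∑ u, splitMatrix c u j • Sum.elim a b u = c j • a j + (c j + 1) • b j := by
  simp [splitMatrix, Fintype.sum_sum_type, Pi.single_apply, ← natCast_zsmul]

lemma sum_splitMatrix_mul_mem_Icc [Fintype ι] {c v : ι → ℕ} {T M : ℕ}
    (hcv : ∀ j, c j * v j = T) (hvM : ∀ j, v j ≤ M) (u : ι ⊕ ι) :
    (T : ℤ) ≤ ∑ j, splitMatrix c u j * v j ∧ ∑ j, splitMatrix c u j * v j ≤ T + M := by
  rcases u with j | j
  · rw [show ∑ j', splitMatrix c (.inl j) j' * v j' = c j * v j from single_dotProduct _ _ _]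
    constructor
    · exact_mod_cast (hcv j).ge
    · exact_mod_cast (hcv j).le.trans (Nat.le_add_right T M)
  · rw [show ∑ j', splitMatrix c (.inr j) j' * v j' = (c j + 1 : ℕ) * v j from
      single_dotProduct _ _ _]
    have hT : (c j + 1) * v j = T + v j := by rw [add_one_mul, hcv]
    constructor <;> norm_cast <;> rw [hT]
    · exact Nat.le_add_right T _
    · exact Nat.add_le_add_left (hvM j) T

lemma exists_factorization_splitMatrix [Fintype ι] [Fintype κ] (hG : IsSimpleDimensionGroup P)
    (h0 : (0 : G) ∈ P) (hac : IsAcyclic G) (e : ι ⊕ ι ≃ κ) (η : (ι → ℤ) →+ G)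
    (hη : ∀ x : ι → ℤ, (∀ j, 0 ≤ x j) → η x ∈ P) (c : ι → ℕ) :
    ∃ η' : (κ → ℤ) →+ G, (∀ x : κ → ℤ, (∀ i, 0 ≤ x i) → η' x ∈ P) ∧
      ∀ x : ι → ℤ, η' (fun i => ∑ j, splitMatrix c (e.symm i) j * x j) = η x := by
  choose a ha b hb hab using fun j => exists_eq_nsmul_add_succ_nsmul hG h0 hac
    (hη (fun j' => if j = j' then 1 else 0) fun _ => by split_ifs <;> norm_num) (c j)
  have habP : ∀ u, Sum.elim a b u ∈ P := Sum.forall.2 ⟨ha, hb⟩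
  refine ⟨(Fintype.linearCombination ℤ (Sum.elim a b ∘ e.symm)).toAddMonoidHom,
    fun x hx => hG.2.1.linearCombination_mem h0 (fun i => habP (e.symm i)) hx,
    linearCombination_mulVec_eq η fun j => ?_⟩
  simp only [Function.comp_apply]
  rw [hab j, e.symm.sum_comp (fun u => splitMatrix c u j • Sum.elim a b u), sum_splitMatrix_smul]

end Factorization

theorem stmt16_general {G : Type*} [AddCommGroup G] (P : Set G)
    (hG : IsSimpleDimensionGroup P) (hac : IsAcyclic G)
    (J : ℕ)
    (η : (Fin J → ℤ) →+ G) (hη : ∀ x : Fin J → ℤ, (∀ j, 0 ≤ x j) → η x ∈ P)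
    (v : Fin J → ℤ) (hv : ∀ j, 0 < v j)
    (s : ℚ) (hs : 1 < s) :
    ∃ K₀ : ℕ, 0 < K₀ ∧ ∀ K : ℕ, K₀ ≤ K →
      ∃ (B : Fin (2 * J) → Fin J → ℤ) (η' : (Fin (2 * J) → ℤ) →+ G),
        (∀ i j, 0 ≤ B i j) ∧
        (∀ x : Fin (2 * J) → ℤ, (∀ i, 0 ≤ x i) → η' x ∈ P) ∧
        (∀ x : Fin J → ℤ, η' (fun i => ∑ j, B i j * x j) = η x) ∧
        ∀ i, (K : ℚ) ≤ ((∑ j, B i j * v j : ℤ) : ℚ) ∧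
          ((∑ j, B i j * v j : ℤ) : ℚ) ≤ s * K := by
  have h0 : (0 : G) ∈ P := by simpa using hη 0 fun _ => le_rfl
  lift v to Fin J → ℕ using fun j => (hv j).le
  set L := ∏ j, v j
  have hvL : ∀ j, v j ∣ L := fun j => Finset.dvd_prod_of_mem v (Finset.mem_univ j)
  have hL : 0 < L := Finset.prod_pos fun j _ => by simpa using hv j
  refine ⟨⌈2 * L / (s - 1)⌉₊ + 1, Nat.succ_pos _, fun K hK => ?_⟩
  have hKs : (K + 2 * L : ℚ) ≤ s * K := by
    have := (Nat.le_ceil _).trans (Nat.cast_le.2 (Nat.le_of_succ_le hK))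
    rw [div_le_iff₀ (sub_pos.2 hs)] at this
    linarith
  -- the least multiple of `L` above `K` is a common multiple of all `v j`
  set T := L * (K / L + 1)
  have hKT : K < T := Nat.lt_mul_div_succ K hL
  have hTK : T ≤ K + L := by
    rw [show T = L * (K / L) + L from mul_add_one L _]
    exact Nat.add_le_add_right (Nat.mul_div_le K L) L
  let e : Fin J ⊕ Fin J ≃ Fin (2 * J) := finSumFinEquiv.trans (finCongr (two_mul J).symm)
  obtain ⟨η', hη'P, hη'⟩ := exists_factorization_splitMatrix hG h0 hac e η hη (fun j => T / v j)
  refine ⟨fun i => splitMatrix _ (e.symm i), η', fun i => splitMatrix_nonneg _ (e.symm i), hη'P,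
    hη', fun i => ?_⟩
  obtain ⟨hlo, hhi⟩ := sum_splitMatrix_mul_mem_Icc (c := fun j => T / v j) (v := v) (T := T)
    (fun j => Nat.div_mul_cancel ((hvL j).trans (dvd_mul_right L _)))
    (fun j => Nat.le_of_dvd hL (hvL j)) (e.symm i)
  beta_reduce
  qify at hlo hhi hKT hTK ⊢
  constructor <;> linarith

/-- Proposition 3.2. -/
theorem stmt16 {G : Type*} [AddCommGroup G] (P : Set G)
    (hG : IsSimpleDimensionGroup P) (hac : IsAcyclic G)
    (J : ℕ) (hJ : 0 < J)
    (η : (Fin J → ℤ) →+ G) (hη : ∀ x : Fin J → ℤ, (∀ j, 0 ≤ x j) → η x ∈ P)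
    (v : Fin J → ℤ) (hv : ∀ j, 0 < v j)
    (s : ℚ) (hs : 1 < s) :
    ∃ K₀ : ℕ, 0 < K₀ ∧ ∀ K : ℕ, K₀ ≤ K →
      ∃ (B : Fin (2 * J) → Fin J → ℤ) (η' : (Fin (2 * J) → ℤ) →+ G),
        (∀ i j, 0 ≤ B i j) ∧
        (∀ x : Fin (2 * J) → ℤ, (∀ i, 0 ≤ x i) → η' x ∈ P) ∧
        (∀ x : Fin J → ℤ, η' (fun i => ∑ j, B i j * x j) = η x) ∧
        ∀ i, (K : ℚ) ≤ ((∑ j, B i j * v j : ℤ) : ℚ) ∧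
          ((∑ j, B i j * v j : ℤ) : ℚ) ≤ s * K :=
  stmt16_general P hG hac J η hη v hv s hs
end
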